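/- Assume the F-expectation satisfies (H0)–(H7) and let {X(τ):τ∈S_0} be a CE admissible family with sup_{τ∈S_0} E[X(τ)] < ∞. Fix θ∈S_0 and define the modified reward X'(τ) = X(τ)1_{{τ≥θ}} − 1_{{τ<θ}} and the value function v'(S) = esssup_{τ∈S_S} E_S[X'(τ)] (well defined since X'(τ)+1 ∈ Dom⁺(E), setting E_S[X'(τ)] := E_S[X'(τ)+1] − 1). Then: for each S∈S_0 there exists an optimal stopping time for v'(S); the random time τ'(S) = essinf{τ∈S_S : v'(τ)=X'(τ) a.s.} is a stopping time and is the minimal optimal stopping time for v'(S), i.e. v'(S)=E_S[X'(τ'(S))] a.s. and τ'(S) ≤ τ a.s. for any τ∈S_S with v'(S)=E_S[X'(τ)] a.s.; and the family {v'(S):S∈S_0} is LCE. -/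

import Mathlib

open MeasureTheory Filter Set

noncomputable section

namespace OptMultStop

variable {Ω : Type*}

/-- A real function is right-continuous with left limits (RCLL) on `[0, T]`. -/
def RCLLOn (f : ℝ → ℝ) (T : ℝ) : Prop :=
  (∀ t ∈ Set.Ico (0 : ℝ) T, ContinuousWithinAt f (Set.Ici t) t) ∧
    ∀ t ∈ Set.Ioc (0 : ℝ) T, ∃ l : ℝ, Filter.Tendsto f (nhdsWithin t (Set.Iio t)) (nhds l)

/-- A real function is right-continuous on `[0, T)`. -/
def RCOn (f : ℝ → ℝ) (T : ℝ) : Prop :=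
  ∀ t ∈ Set.Ico (0 : ℝ) T, ContinuousWithinAt f (Set.Ici t) t

/-- `τ` is a stopping time for `ℱ` taking values in `[s ·, T]`; for `s = S` a stopping
time this encodes membership in `S_S`. -/
def IsStopIn [m : MeasurableSpace Ω] (ℱ : Filtration ℝ m) (T : ℝ) (s τ : Ω → ℝ) : Prop :=
  IsStoppingTime ℱ (fun ω => (τ ω : WithTop ℝ)) ∧ (∀ ω, s ω ≤ τ ω) ∧ ∀ ω, τ ω ≤ T

/-- Membership in `S_0`: a stopping time with values in `[0, T]`. -/
def Stop0 [m : MeasurableSpace Ω] (ℱ : Filtration ℝ m) (T : ℝ) (τ : Ω → ℝ) : Prop :=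
  IsStopIn ℱ T (fun _ => (0 : ℝ)) τ

/-- `g` is an essential supremum of the family of random variables `s`. -/
def IsEssSupFam [MeasurableSpace Ω] (μ : Measure Ω) (s : Set (Ω → ℝ)) (g : Ω → ℝ) : Prop :=
  (∀ f ∈ s, f ≤ᵐ[μ] g) ∧ ∀ h : Ω → ℝ, (∀ f ∈ s, f ≤ᵐ[μ] h) → g ≤ᵐ[μ] h

/-- `g` is an essential infimum of the family of random variables `s`. -/
def IsEssInfFam [MeasurableSpace Ω] (μ : Measure Ω) (s : Set (Ω → ℝ)) (g : Ω → ℝ) : Prop :=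
  (∀ f ∈ s, g ≤ᵐ[μ] f) ∧ ∀ h : Ω → ℝ, (∀ f ∈ s, h ≤ᵐ[μ] f) → h ≤ᵐ[μ] g

/-- An `𝔽`-consistent nonlinear expectation `(E, Dom(E))` on the horizon `[0, T]`,
together with its conditional versions at stopping times, satisfying the domain
axioms (D1)-(D3), (A1)-(A4) at stopping times, and hypotheses (H0)-(H5). -/
structure FExp [m : MeasurableSpace Ω] (μ : Measure Ω) (T : ℝ) (ℱ : Filtration ℝ m) where
  /-- the domain `Dom(E)` -/
  Dom : Set (Ω → ℝ)
  /-- `cond τ ξ` is the conditional expectation `E_τ[ξ]` at the stopping time `τ` -/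
  cond : (Ω → ℝ) → (Ω → ℝ) → Ω → ℝ
  /-- `E0 ξ` is the (deterministic) value `E[ξ] = E_0[ξ]` -/
  E0 : (Ω → ℝ) → ℝ
  zero_mem : (fun _ => (0 : ℝ)) ∈ Dom
  one_mem : (fun _ => (1 : ℝ)) ∈ Dom
  /-- (H4): all constants belong to the domain -/
  const_mem : ∀ c : ℝ, (fun _ => c) ∈ Dom
  add_mem : ∀ {ξ η : Ω → ℝ}, ξ ∈ Dom → η ∈ Dom → ξ + η ∈ Dom
  indicator_mem : ∀ {ξ : Ω → ℝ}, ξ ∈ Dom → ∀ {A : Set Ω}, MeasurableSet A →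
    A.indicator ξ ∈ Dom
  sandwich_mem : ∀ {ξ η : Ω → ℝ}, η ∈ Dom → (∀ᵐ ω ∂μ, 0 ≤ ξ ω ∧ ξ ω ≤ η ω) → ξ ∈ Dom
  cond_mem : ∀ {τ ξ : Ω → ℝ}, Stop0 ℱ T τ → ξ ∈ Dom → 0 ≤ᵐ[μ] ξ → cond τ ξ ∈ Dom
  cond_nonneg : ∀ {τ ξ : Ω → ℝ}, Stop0 ℱ T τ → ξ ∈ Dom → 0 ≤ᵐ[μ] ξ → 0 ≤ᵐ[μ] cond τ ξ
  /-- `E_τ[ξ]` is `F_τ`-measurable -/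
  cond_adapted : ∀ {τ ξ : Ω → ℝ} (hτ : Stop0 ℱ T τ), ξ ∈ Dom → 0 ≤ᵐ[μ] ξ →
    Measurable[hτ.1.measurableSpace] (cond τ ξ)
  /-- monotonicity -/
  mono : ∀ {τ ξ η : Ω → ℝ}, Stop0 ℱ T τ → ξ ∈ Dom → 0 ≤ᵐ[μ] ξ → η ∈ Dom → 0 ≤ᵐ[μ] η →
    ξ ≤ᵐ[μ] η → cond τ ξ ≤ᵐ[μ] cond τ η
  /-- strict monotonicity -/
  strict_mono : ∀ {τ ξ η : Ω → ℝ}, Stop0 ℱ T τ → ξ ∈ Dom → 0 ≤ᵐ[μ] ξ → η ∈ Dom →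
    0 ≤ᵐ[μ] η → ξ ≤ᵐ[μ] η → cond τ ξ =ᵐ[μ] cond τ η → ξ =ᵐ[μ] η
  /-- time consistency -/
  time_consistent : ∀ {σ τ ξ : Ω → ℝ}, Stop0 ℱ T σ → Stop0 ℱ T τ → (∀ ω, σ ω ≤ τ ω) →
    ξ ∈ Dom → 0 ≤ᵐ[μ] ξ → cond σ (cond τ ξ) =ᵐ[μ] cond σ ξ
  /-- zero-one law -/
  zero_one : ∀ {τ ξ : Ω → ℝ} (hτ : Stop0 ℱ T τ), ξ ∈ Dom → 0 ≤ᵐ[μ] ξ →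
    ∀ {A : Set Ω}, MeasurableSet[hτ.1.measurableSpace] A →
    cond τ (A.indicator ξ) =ᵐ[μ] A.indicator (cond τ ξ)
  /-- translation invariance -/
  translation : ∀ {τ ξ η : Ω → ℝ} (hτ : Stop0 ℱ T τ), ξ ∈ Dom → 0 ≤ᵐ[μ] ξ → η ∈ Dom →
    0 ≤ᵐ[μ] η → Measurable[hτ.1.measurableSpace] η → cond τ (ξ + η) =ᵐ[μ] cond τ ξ + η
  /-- `F_0` is trivial: `E_0[ξ]` is the constant `E0 ξ` -/
  E0_eq : ∀ {ξ : Ω → ℝ}, ξ ∈ Dom → 0 ≤ᵐ[μ] ξ →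
    cond (fun _ => (0 : ℝ)) ξ =ᵐ[μ] fun _ => E0 ξ
  /-- the process `t ↦ E_t[ξ]` has RCLL paths -/
  rcll_paths : ∀ {ξ : Ω → ℝ}, ξ ∈ Dom → 0 ≤ᵐ[μ] ξ →
    ∀ᵐ ω ∂μ, RCLLOn (fun t => cond (fun _ => t) ξ ω) T
  /-- (H0) -/
  h0 : ∀ {A : Set Ω}, MeasurableSet A → 0 < μ A →
    Tendsto (fun n : ℕ => E0 (A.indicator fun _ => (n : ℝ))) atTop atTop
  /-- (H1) -/
  h1 : ∀ {ξ : Ω → ℝ}, ξ ∈ Dom → 0 ≤ᵐ[μ] ξ → ∀ {A : ℕ → Set Ω},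
    (∀ n, MeasurableSet (A n)) → Monotone A → (∀ᵐ ω ∂μ, ω ∈ ⋃ n, A n) →
    Tendsto (fun n => E0 ((A n).indicator ξ)) atTop (nhds (E0 ξ))
  /-- (H2) -/
  h2 : ∀ {ξ η : Ω → ℝ}, ξ ∈ Dom → 0 ≤ᵐ[μ] ξ → η ∈ Dom → 0 ≤ᵐ[μ] η →
    ∀ {A : ℕ → Set Ω}, (∀ n, MeasurableSet (A n)) → Antitone A →
    (∀ᵐ ω ∂μ, ω ∉ ⋂ n, A n) →
    Tendsto (fun n => E0 (ξ + (A n).indicator η)) atTop (nhds (E0 ξ))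
  /-- (H5) -/
  h5 : ∀ {ξ : ℕ → Ω → ℝ} {ζ : Ω → ℝ}, (∀ n, ξ n ∈ Dom) → (∀ n, 0 ≤ᵐ[μ] ξ n) →
    (∀ᵐ ω ∂μ, Tendsto (fun n => ξ n ω) atTop (nhds (ζ ω))) →
    (∃ C : ℝ, ∃ᶠ n in atTop, E0 (ξ n) ≤ C) → ζ ∈ Dom

variable [m : MeasurableSpace Ω] {μ : Measure Ω} {T : ℝ} {ℱ : Filtration ℝ m}

/-- (H6): sub-additivity. -/
def FExp.Subadditive (𝔈 : FExp μ T ℱ) : Prop :=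
  ∀ ⦃τ ξ η : Ω → ℝ⦄, Stop0 ℱ T τ → ξ ∈ 𝔈.Dom → 0 ≤ᵐ[μ] ξ → η ∈ 𝔈.Dom → 0 ≤ᵐ[μ] η →
    𝔈.cond τ (ξ + η) ≤ᵐ[μ] 𝔈.cond τ ξ + 𝔈.cond τ η

/-- (H7): positive homogeneity. -/
def FExp.PosHom (𝔈 : FExp μ T ℱ) : Prop :=
  ∀ ⦃τ ξ : Ω → ℝ⦄ (l : ℝ), 0 ≤ l → Stop0 ℱ T τ → ξ ∈ 𝔈.Dom → 0 ≤ᵐ[μ] ξ →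
    𝔈.cond τ (fun ω => l * ξ ω) =ᵐ[μ] fun ω => l * 𝔈.cond τ ξ ω

/-- Admissible family of rewards indexed by stopping times. -/
def Admissible (𝔈 : FExp μ T ℱ) (X : (Ω → ℝ) → Ω → ℝ) : Prop :=
  (∀ τ : Ω → ℝ, ∀ hτ : Stop0 ℱ T τ, X τ ∈ 𝔈.Dom ∧ 0 ≤ᵐ[μ] X τ ∧
      Measurable[hτ.1.measurableSpace] (X τ)) ∧
    ∀ τ σ : Ω → ℝ, Stop0 ℱ T τ → Stop0 ℱ T σ →
      ∀ᵐ ω ∂μ, τ ω = σ ω → X τ ω = X σ ω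

/-- `sup_{τ ∈ S_0} E[X(τ)] < ∞`. -/
def BddRewardE0 (𝔈 : FExp μ T ℱ) (X : (Ω → ℝ) → Ω → ℝ) : Prop :=
  ∃ C : ℝ, ∀ τ : Ω → ℝ, Stop0 ℱ T τ → 𝔈.E0 (X τ) ≤ C

/-- `v` is the value function family of the single stopping problem for the reward `X`:
`v(S) = esssup_{τ ∈ S_S} E_S[X(τ)]`. -/
def IsValueFam (𝔈 : FExp μ T ℱ) (X v : (Ω → ℝ) → Ω → ℝ) : Prop :=
  ∀ S : Ω → ℝ, Stop0 ℱ T S →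
    IsEssSupFam μ {g | ∃ τ : Ω → ℝ, IsStopIn ℱ T S τ ∧ g = 𝔈.cond S (X τ)} (v S)

/-- An `E`-supermartingale system. -/
def SupermartSys (𝔈 : FExp μ T ℱ) (h : (Ω → ℝ) → Ω → ℝ) : Prop :=
  (∀ τ : Ω → ℝ, ∀ hτ : Stop0 ℱ T τ, h τ ∈ 𝔈.Dom ∧ 0 ≤ᵐ[μ] h τ ∧
      Measurable[hτ.1.measurableSpace] (h τ)) ∧
    ∀ τ σ : Ω → ℝ, Stop0 ℱ T τ → Stop0 ℱ T σ → (∀ᵐ ω ∂μ, τ ω ≤ σ ω) →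
      𝔈.cond τ (h σ) ≤ᵐ[μ] h τ

/-- Right-continuity along stopping times in `E`-expectation (RCE). -/
def RCE (𝔈 : FExp μ T ℱ) (X : (Ω → ℝ) → Ω → ℝ) : Prop :=
  ∀ τ : Ω → ℝ, Stop0 ℱ T τ → ∀ τs : ℕ → Ω → ℝ, (∀ n, Stop0 ℱ T (τs n)) →
    (∀ᵐ ω ∂μ, Antitone (fun n => τs n ω) ∧
      Tendsto (fun n => τs n ω) atTop (nhds (τ ω))) →
    Tendsto (fun n => 𝔈.E0 (X (τs n))) atTop (nhds (𝔈.E0 (X τ)))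

/-- Left-continuity along stopping times in `E`-expectation (LCE). -/
def LCE (𝔈 : FExp μ T ℱ) (X : (Ω → ℝ) → Ω → ℝ) : Prop :=
  ∀ τ : Ω → ℝ, Stop0 ℱ T τ → ∀ τs : ℕ → Ω → ℝ, (∀ n, Stop0 ℱ T (τs n)) →
    (∀ᵐ ω ∂μ, Monotone (fun n => τs n ω) ∧
      Tendsto (fun n => τs n ω) atTop (nhds (τ ω))) →
    Tendsto (fun n => 𝔈.E0 (X (τs n))) atTop (nhds (𝔈.E0 (X τ)))

/-- Continuity along stopping times in `E`-expectation (CE). -/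
def CE (𝔈 : FExp μ T ℱ) (X : (Ω → ℝ) → Ω → ℝ) : Prop :=
  RCE 𝔈 X ∧ LCE 𝔈 X

/-- Right-continuity along stopping times (RC): a.s. pointwise convergence. -/
def RCfam (𝔈 : FExp μ T ℱ) (X : (Ω → ℝ) → Ω → ℝ) : Prop :=
  ∀ τ : Ω → ℝ, Stop0 ℱ T τ → ∀ τs : ℕ → Ω → ℝ, (∀ n, Stop0 ℱ T (τs n)) →
    (∀ᵐ ω ∂μ, Antitone (fun n => τs n ω) ∧
      Tendsto (fun n => τs n ω) atTop (nhds (τ ω))) →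
    ∀ᵐ ω ∂μ, Tendsto (fun n => X (τs n) ω) atTop (nhds (X τ ω))

/-- Biadmissible family of rewards indexed by pairs of stopping times. -/
def Biadmissible (𝔈 : FExp μ T ℱ) (X : (Ω → ℝ) → (Ω → ℝ) → Ω → ℝ) : Prop :=
  (∀ τ σ : Ω → ℝ, ∀ hτ : Stop0 ℱ T τ, ∀ hσ : Stop0 ℱ T σ,
      X τ σ ∈ 𝔈.Dom ∧ 0 ≤ᵐ[μ] X τ σ ∧
      Measurable[(hτ.1.max hσ.1).measurableSpace] (X τ σ)) ∧
    ∀ τ σ τ' σ' : Ω → ℝ, Stop0 ℱ T τ → Stop0 ℱ T σ → Stop0 ℱ T τ' → Stop0 ℱ T σ' →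
      ∀ᵐ ω ∂μ, τ ω = τ' ω → σ ω = σ' ω → X τ σ ω = X τ' σ' ω

/-- `sup_{τ,σ ∈ S_0} E[X(τ,σ)] < ∞`. -/
def BddReward2E0 (𝔈 : FExp μ T ℱ) (X : (Ω → ℝ) → (Ω → ℝ) → Ω → ℝ) : Prop :=
  ∃ C : ℝ, ∀ τ σ : Ω → ℝ, Stop0 ℱ T τ → Stop0 ℱ T σ → 𝔈.E0 (X τ σ) ≤ C

/-- `v` is the value function family of the double stopping problem:
`v(S) = esssup_{τ₁,τ₂ ∈ S_S} E_S[X(τ₁,τ₂)]`. -/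
def IsValueFam2 (𝔈 : FExp μ T ℱ) (X : (Ω → ℝ) → (Ω → ℝ) → Ω → ℝ)
    (v : (Ω → ℝ) → Ω → ℝ) : Prop :=
  ∀ S : Ω → ℝ, Stop0 ℱ T S →
    IsEssSupFam μ
      {g | ∃ τ₁ τ₂ : Ω → ℝ, IsStopIn ℱ T S τ₁ ∧ IsStopIn ℱ T S τ₂ ∧
        g = 𝔈.cond S (X τ₁ τ₂)} (v S)

/-- `u₁(θ) = esssup_{τ₁ ∈ S_θ} E_θ[X(τ₁, θ)]`. -/
def IsU1 (𝔈 : FExp μ T ℱ) (X : (Ω → ℝ) → (Ω → ℝ) → Ω → ℝ) (u₁ : (Ω → ℝ) → Ω → ℝ) : Prop :=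
  ∀ θ : Ω → ℝ, Stop0 ℱ T θ →
    IsEssSupFam μ {g | ∃ τ : Ω → ℝ, IsStopIn ℱ T θ τ ∧ g = 𝔈.cond θ (X τ θ)} (u₁ θ)

/-- `u₂(θ) = esssup_{τ₂ ∈ S_θ} E_θ[X(θ, τ₂)]`. -/
def IsU2 (𝔈 : FExp μ T ℱ) (X : (Ω → ℝ) → (Ω → ℝ) → Ω → ℝ) (u₂ : (Ω → ℝ) → Ω → ℝ) : Prop :=
  ∀ θ : Ω → ℝ, Stop0 ℱ T θ →
    IsEssSupFam μ {g | ∃ τ : Ω → ℝ, IsStopIn ℱ T θ τ ∧ g = 𝔈.cond θ (X θ τ)} (u₂ θ)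

/-- Uniform right-continuity of a biadmissible family along stopping times in
`ℰ`-expectation (URCℰ). -/
def URCE2 (ℰ : FExp μ T ℱ) (X : (Ω → ℝ) → (Ω → ℝ) → Ω → ℝ) : Prop :=
  ∀ σ : Ω → ℝ, Stop0 ℱ T σ → ∀ σs : ℕ → Ω → ℝ, (∀ n, Stop0 ℱ T (σs n)) →
    (∀ᵐ ω ∂μ, Antitone (fun n => σs n ω) ∧
      Tendsto (fun n => σs n ω) atTop (nhds (σ ω))) →
    ∀ ε : ℝ, 0 < ε → ∃ N : ℕ, ∀ n ≥ N, ∀ τ : Ω → ℝ, Stop0 ℱ T τ →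
      ℰ.E0 (fun ω => |X τ σ ω - X τ (σs n) ω|) ≤ ε ∧
      ℰ.E0 (fun ω => |X σ τ ω - X (σs n) τ ω|) ≤ ε

/-- Uniform left-continuity of a biadmissible family along stopping times in
`ℰ`-expectation (ULCℰ). -/
def ULCE2 (ℰ : FExp μ T ℱ) (X : (Ω → ℝ) → (Ω → ℝ) → Ω → ℝ) : Prop :=
  ∀ σ : Ω → ℝ, Stop0 ℱ T σ → ∀ σs : ℕ → Ω → ℝ, (∀ n, Stop0 ℱ T (σs n)) →
    (∀ᵐ ω ∂μ, Monotone (fun n => σs n ω) ∧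
      Tendsto (fun n => σs n ω) atTop (nhds (σ ω))) →
    ∀ ε : ℝ, 0 < ε → ∃ N : ℕ, ∀ n ≥ N, ∀ τ : Ω → ℝ, Stop0 ℱ T τ →
      ℰ.E0 (fun ω => |X τ σ ω - X τ (σs n) ω|) ≤ ε ∧
      ℰ.E0 (fun ω => |X σ τ ω - X (σs n) τ ω|) ≤ ε

/-- Uniform continuity (UCℰ) of a biadmissible family. -/
def UCE2 (ℰ : FExp μ T ℱ) (X : (Ω → ℝ) → (Ω → ℝ) → Ω → ℝ) : Prop :=
  URCE2 ℰ X ∧ ULCE2 ℰ X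

/-- `(E, Dom(E))` is dominated by `(Ẽ, Dom(Ẽ))`. -/
def Dominated (𝔈 𝔉 : FExp μ T ℱ) : Prop :=
  𝔈.Dom ⊆ 𝔉.Dom ∧
    ∀ τ : Ω → ℝ, Stop0 ℱ T τ → ∀ ξ η : Ω → ℝ, ξ ∈ 𝔈.Dom → η ∈ 𝔈.Dom →
      ∀ᵐ ω ∂μ, 𝔈.cond τ (ξ + η) ω - 𝔈.cond τ η ω ≤ 𝔉.cond τ ξ ω

/-- The filtration contains all `μ`-null sets (part of the usual conditions). -/
def CompleteFiltration (μ : Measure Ω) (ℱ : Filtration ℝ m) : Prop :=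
  ∀ s : Set Ω, μ s = 0 → ∀ t : ℝ, MeasurableSet[ℱ t] s

/-- The filtration is right-continuous (part of the usual conditions). -/
def RightContinuousFiltration (ℱ : Filtration ℝ m) : Prop :=
  ∀ t : ℝ, (ℱ t : MeasurableSpace Ω) = ⨅ u ∈ Set.Ioi t, ℱ u

/-- A `d`-tuple of stopping times, all in `S_s`. -/
def StopVec (ℱ : Filtration ℝ m) (T : ℝ) (s : Ω → ℝ) {d : ℕ} (τ : Fin d → Ω → ℝ) : Prop :=
  ∀ i, IsStopIn ℱ T s (τ i)

/-- A `d`-admissible family of rewards. -/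
def DAdmissible (𝔈 : FExp μ T ℱ) {d : ℕ} (X : (Fin d → Ω → ℝ) → Ω → ℝ) : Prop :=
  (∀ τ : Fin d → Ω → ℝ, StopVec ℱ T (fun _ => (0 : ℝ)) τ →
      X τ ∈ 𝔈.Dom ∧ 0 ≤ᵐ[μ] X τ ∧
      ∀ h : IsStoppingTime ℱ fun ω => (((⨆ i, τ i ω : ℝ)) : WithTop ℝ),
        Measurable[h.measurableSpace] (X τ)) ∧
    ∀ τ σ : Fin d → Ω → ℝ, StopVec ℱ T (fun _ => (0 : ℝ)) τ →
      StopVec ℱ T (fun _ => (0 : ℝ)) σ →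
      ∀ᵐ ω ∂μ, (∀ i, τ i ω = σ i ω) → X τ ω = X σ ω

/-- `sup_{τ ∈ S_0^d} E[X(τ)] < ∞`. -/
def BddRewardDE0 (𝔈 : FExp μ T ℱ) {d : ℕ} (X : (Fin d → Ω → ℝ) → Ω → ℝ) : Prop :=
  ∃ C : ℝ, ∀ τ : Fin d → Ω → ℝ, StopVec ℱ T (fun _ => (0 : ℝ)) τ → 𝔈.E0 (X τ) ≤ C

/-- `v` is the value function family of the `d`-stopping problem:
`v(S) = esssup_{τ ∈ S_S^d} E_S[X(τ)]`. -/
def IsValueFamD (𝔈 : FExp μ T ℱ) {d : ℕ} (X : (Fin d → Ω → ℝ) → Ω → ℝ)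
    (v : (Ω → ℝ) → Ω → ℝ) : Prop :=
  ∀ S : Ω → ℝ, Stop0 ℱ T S →
    IsEssSupFam μ
      {g | ∃ τ : Fin d → Ω → ℝ, StopVec ℱ T S τ ∧ g = 𝔈.cond S (X τ)} (v S)

/-- `u^{(i)}(θ) = esssup_{τ ∈ S_θ^{d-1}} E_θ[X^{(i)}(τ, θ)]`, where `X^{(i)}(τ, θ)`
inserts `θ` in the `i`-th slot. -/
def IsUi (𝔈 : FExp μ T ℱ) {d : ℕ} (X : (Fin (d + 1) → Ω → ℝ) → Ω → ℝ)
    (ui : Fin (d + 1) → (Ω → ℝ) → Ω → ℝ) : Prop :=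
  ∀ i : Fin (d + 1), ∀ θ : Ω → ℝ, Stop0 ℱ T θ →
    IsEssSupFam μ
      {g | ∃ τ : Fin d → Ω → ℝ, StopVec ℱ T θ τ ∧ g = 𝔈.cond θ (X (i.insertNth θ τ))}
      (ui i θ)

/-- Uniform continuity (UCE) of a `d`-admissible family along monotone sequences of
stopping times. -/
def UCED (𝔈 : FExp μ T ℱ) {d : ℕ} (X : (Fin (d + 1) → Ω → ℝ) → Ω → ℝ) : Prop :=
  ∀ i : Fin (d + 1), ∀ S : Ω → ℝ, Stop0 ℱ T S → ∀ Ss : ℕ → Ω → ℝ,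
    (∀ n, Stop0 ℱ T (Ss n)) →
    ((∀ᵐ ω ∂μ, Monotone fun n => Ss n ω) ∨ (∀ᵐ ω ∂μ, Antitone fun n => Ss n ω)) →
    (∀ᵐ ω ∂μ, Tendsto (fun n => Ss n ω) atTop (nhds (S ω))) →
    ∀ ε : ℝ, 0 < ε → ∃ N : ℕ, ∀ n ≥ N, ∀ θ : Fin d → Ω → ℝ,
      StopVec ℱ T (fun _ => (0 : ℝ)) θ →
      𝔈.E0 (fun ω => |X (i.insertNth (Ss n) θ) ω - X (i.insertNth S θ) ω|) ≤ ε

/-!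
Shift everything by one: `Y(τ) = X'(τ) + 1 = 𝟙_{θ ≤ τ} (X(τ) + 1)` lies in `Dom⁺(E)` and its
value is `W = v' + 1 ≥ 1`. The reward `Y` is not continuous in `E`-expectation, but it is along
stopping times after `θ`, and these are the only times the `λ`-method of the paper looks at:
since `W ≥ 1` while `Y = 0` before `θ`, the sets `D^λ_S = {τ ∈ S_S : λ W(τ) ≤ Y(τ)}` contain only
times after `θ`.

For `λ < 1` the essential infimum `τ^λ` of `D^λ_S` loses no value, `E[W(τ^λ)] = E[W(S)]`, and
right-continuity gives `λ E[W(τ^λ)] ≤ E[Y(τ^λ)]`. As `λ ↑ 1` the times `τ^λ` increase to a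
stopping time which is optimal by left-continuity and is the least element of `D_S`, hence the
minimal optimal time. These minimal optimal times increase with `S`, and left-continuity of `Y`
along them gives left-continuity of `E[W]`.
-/

open Topology

section StoppingTimes

variable {τ σ ρ s S : Ω → ℝ}

lemma isStoppingTime_coe_iff :
    IsStoppingTime ℱ (fun ω => (τ ω : WithTop ℝ)) ↔
      ∀ t : ℝ, MeasurableSet[ℱ t] {ω | τ ω ≤ t} := by
  simp only [IsStoppingTime, WithTop.coe_le_coe]

lemma measurableSet_stoppingTime_coe_iff (hτ : IsStoppingTime ℱ (fun ω => (τ ω : WithTop ℝ)))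
    {A : Set Ω} :
    MeasurableSet[hτ.measurableSpace] A ↔ ∀ t : ℝ, MeasurableSet[ℱ t] (A ∩ {ω | τ ω ≤ t}) := by
  simp only [IsStoppingTime.measurableSet, WithTop.coe_le_coe, and_iff_right_iff_imp]
  intro h
  have hA : A = ⋃ n : ℕ, A ∩ {ω | τ ω ≤ n} := by
    ext ω
    simpa using fun _ => exists_nat_ge (τ ω)
  rw [hA]
  exact .iUnion fun n => le_iSup (fun t => (ℱ t : MeasurableSpace Ω)) (n : ℝ) _ (h n)

lemma measurableSet_inter_of_le_on (hσ : IsStoppingTime ℱ (fun ω => (σ ω : WithTop ℝ)))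
    {ν : Ω → ℝ} (hν : IsStoppingTime ℱ (fun ω => (ν ω : WithTop ℝ))) {C A : Set Ω}
    (hC : MeasurableSet[hσ.measurableSpace] C) (hA : MeasurableSet[hν.measurableSpace] A)
    (hle : ∀ ω ∈ A, σ ω ≤ ν ω) : MeasurableSet[hν.measurableSpace] (C ∩ A) := by
  rw [measurableSet_stoppingTime_coe_iff] at hC hA ⊢
  intro t
  have : C ∩ A ∩ {ω | ν ω ≤ t} = (C ∩ {ω | σ ω ≤ t}) ∩ (A ∩ {ω | ν ω ≤ t}) := by
    ext ω
    simp only [mem_inter_iff, mem_ofPred_eq]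
    exact ⟨fun ⟨⟨hc, ha⟩, h⟩ => ⟨⟨hc, (hle ω ha).trans h⟩, ha, h⟩,
      fun ⟨⟨hc, _⟩, ha, h⟩ => ⟨⟨hc, ha⟩, h⟩⟩
  rw [this]
  exact (hC t).inter (hA t)

lemma measurableSet_of_eqOn (hρ : IsStoppingTime ℱ (fun ω => (ρ ω : WithTop ℝ)))
    {κ : Ω → ℝ} (hκ : IsStoppingTime ℱ (fun ω => (κ ω : WithTop ℝ))) {A : Set Ω}
    (hA : MeasurableSet[hρ.measurableSpace] A) (heq : ∀ ω ∈ A, κ ω = ρ ω) :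
    MeasurableSet[hκ.measurableSpace] A := by
  rw [measurableSet_stoppingTime_coe_iff] at hA ⊢
  intro t
  have : A ∩ {ω | κ ω ≤ t} = A ∩ {ω | ρ ω ≤ t} := by
    ext ω
    simp only [mem_inter_iff, mem_ofPred_eq]
    exact ⟨fun ⟨ha, h⟩ => ⟨ha, heq ω ha ▸ h⟩, fun ⟨ha, h⟩ => ⟨ha, (heq ω ha).symm ▸ h⟩⟩
  rw [this]
  exact hA t

lemma measurable_indicator_of_le_on (hσ : IsStoppingTime ℱ (fun ω => (σ ω : WithTop ℝ)))
    {ν : Ω → ℝ} (hν : IsStoppingTime ℱ (fun ω => (ν ω : WithTop ℝ))) {f : Ω → ℝ}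
    (hf : Measurable[hσ.measurableSpace] f) {A : Set Ω}
    (hA : MeasurableSet[hν.measurableSpace] A) (hle : ∀ ω ∈ A, σ ω ≤ ν ω) :
    Measurable[hν.measurableSpace] (A.indicator f) := by
  intro B hB
  have : A.indicator f ⁻¹' B = (f ⁻¹' B ∩ A) ∪ (Aᶜ ∩ {_ω | (0 : ℝ) ∈ B}) := by
    ext ω
    by_cases hω : ω ∈ A <;> simp [hω]
  rw [this]
  refine (measurableSet_inter_of_le_on hσ hν (hf hB) hA hle).union (hA.compl.inter ?_)
  by_cases h0 : (0 : ℝ) ∈ B <;> simp [h0]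

lemma measurableSet_le_coe (hσ : IsStoppingTime ℱ (fun ω => (σ ω : WithTop ℝ)))
    (hτ : IsStoppingTime ℱ (fun ω => (τ ω : WithTop ℝ))) :
    MeasurableSet[hτ.measurableSpace] {ω | σ ω ≤ τ ω} := by
  simpa only [WithTop.coe_le_coe] using hσ.measurableSet_stopping_time_le hτ

lemma measurableSet_eq_coe (hσ : IsStoppingTime ℱ (fun ω => (σ ω : WithTop ℝ)))
    (hτ : IsStoppingTime ℱ (fun ω => (τ ω : WithTop ℝ))) :
    MeasurableSet[hσ.measurableSpace] {ω | σ ω = τ ω} := by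
  simpa only [WithTop.coe_eq_coe] using hσ.measurableSet_eq_stopping_time hτ

lemma isStoppingTime_coe_min (hτ : IsStoppingTime ℱ (fun ω => (τ ω : WithTop ℝ)))
    (hσ : IsStoppingTime ℱ (fun ω => (σ ω : WithTop ℝ))) :
    IsStoppingTime ℱ (fun ω => ((min (τ ω) (σ ω) : ℝ) : WithTop ℝ)) := by
  simpa only [WithTop.coe_min] using hτ.min hσ

lemma isStoppingTime_coe_max (hτ : IsStoppingTime ℱ (fun ω => (τ ω : WithTop ℝ)))
    (hσ : IsStoppingTime ℱ (fun ω => (σ ω : WithTop ℝ))) :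
    IsStoppingTime ℱ (fun ω => ((max (τ ω) (σ ω) : ℝ) : WithTop ℝ)) := by
  simpa only [WithTop.coe_max] using hτ.max hσ

/-- Needs right-continuity: `{⨅ n, τ n < t}` is a countable union, `{⨅ n, τ n ≤ t}` is not. -/
lemma isStoppingTime_iInf (hrcf : RightContinuousFiltration ℱ) {τ : ℕ → Ω → ℝ}
    (hτ : ∀ n, IsStoppingTime ℱ (fun ω => (τ n ω : WithTop ℝ)))
    (hbdd : ∀ ω, BddBelow (range (τ · ω))) :
    IsStoppingTime ℱ (fun ω => ((⨅ n, τ n ω : ℝ) : WithTop ℝ)) := by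
  have : ℱ.IsRightContinuous := ⟨fun t => by rw [Filtration.rightCont_eq, hrcf t]; rfl⟩
  refine isStoppingTime_of_measurableSet_lt_of_isRightContinuous fun t => ?_
  have : {ω | ((⨅ n, τ n ω : ℝ) : WithTop ℝ) < t} = ⋃ n, {ω | (τ n ω : WithTop ℝ) < t} := by
    ext ω
    simp only [mem_ofPred_eq, mem_iUnion, WithTop.coe_lt_coe, ciInf_lt_iff (hbdd ω)]
  rw [this]
  exact .iUnion fun n => (hτ n).measurableSet_lt t

lemma isStoppingTime_iSup {τ : ℕ → Ω → ℝ}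
    (hτ : ∀ n, IsStoppingTime ℱ (fun ω => (τ n ω : WithTop ℝ)))
    (hbdd : ∀ ω, BddAbove (range (τ · ω))) :
    IsStoppingTime ℱ (fun ω => ((⨆ n, τ n ω : ℝ) : WithTop ℝ)) := by
  rw [isStoppingTime_coe_iff]
  intro t
  have : {ω | (⨆ n, τ n ω) ≤ t} = ⋂ n, {ω | τ n ω ≤ t} := by
    ext ω
    simp only [mem_ofPred_eq, mem_iInter, ciSup_le_iff (hbdd ω)]
  rw [this]
  exact .iInter fun n => isStoppingTime_coe_iff.1 (hτ n) t

lemma isStoppingTime_congr_ae (hcf : CompleteFiltration μ ℱ)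
    (hτ : IsStoppingTime ℱ (fun ω => (τ ω : WithTop ℝ))) (h : σ =ᵐ[μ] τ) :
    IsStoppingTime ℱ (fun ω => (σ ω : WithTop ℝ)) := by
  rw [isStoppingTime_coe_iff] at hτ ⊢
  intro t
  have hnull : μ {ω | σ ω ≠ τ ω} = 0 := h
  have hsub : ∀ A ⊆ {ω | σ ω ≠ τ ω}, MeasurableSet[ℱ t] A := fun A hA =>
    hcf A (measure_mono_null hA hnull) t
  have : {ω | σ ω ≤ t} = ({ω | τ ω ≤ t} ∪ ({ω | σ ω ≤ t} \ {ω | τ ω ≤ t})) \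
      ({ω | τ ω ≤ t} \ {ω | σ ω ≤ t}) := by
    ext ω
    by_cases h1 : σ ω ≤ t <;> by_cases h2 : τ ω ≤ t <;> simp [h1, h2]
  rw [this]
  refine ((hτ t).union (hsub _ ?_)).diff (hsub _ ?_) <;>
    rintro ω ⟨h1, h2⟩ he <;> simp only [mem_ofPred_eq, he] at h1 h2 <;> exact h2 h1

lemma measurableSet_lt_coe (hσ : IsStoppingTime ℱ (fun ω => (σ ω : WithTop ℝ)))
    (hτ : IsStoppingTime ℱ (fun ω => (τ ω : WithTop ℝ))) :
    MeasurableSet[hτ.measurableSpace] {ω | σ ω < τ ω} := by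
  have h := (hτ.measurableSet_le_stopping_time hσ).compl
  simpa only [WithTop.coe_le_coe, compl_ofPred, not_le] using h

lemma measurable_of_isStoppingTime_coe (hτ : IsStoppingTime ℱ (fun ω => (τ ω : WithTop ℝ))) :
    Measurable τ :=
  measurable_of_Iic fun t => ℱ.le t _ (isStoppingTime_coe_iff.1 hτ t)

lemma stop0_const {c : ℝ} (hc : 0 ≤ c) (hcT : c ≤ T) : Stop0 ℱ T (fun _ : Ω => c) :=
  ⟨isStoppingTime_const ℱ c, fun _ => hc, fun _ => hcT⟩

lemma isStopIn_const_T (hs : ∀ ω, s ω ≤ T) : IsStopIn ℱ T s (fun _ => T) :=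
  ⟨isStoppingTime_const ℱ T, hs, fun _ => le_rfl⟩

lemma IsStopIn.of_le (hτ : IsStopIn ℱ T ρ τ) (hsρ : ∀ ω, s ω ≤ ρ ω) : IsStopIn ℱ T s τ :=
  ⟨hτ.1, fun ω => (hsρ ω).trans (hτ.2.1 ω), hτ.2.2⟩

lemma IsStopIn.stop0 (hS : Stop0 ℱ T S) (hτ : IsStopIn ℱ T S τ) : Stop0 ℱ T τ :=
  hτ.of_le hS.2.1

lemma IsStopIn.self (hS : IsStopIn ℱ T s S) : IsStopIn ℱ T S S :=
  ⟨hS.1, fun _ => le_rfl, hS.2.2⟩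

lemma IsStopIn.measurable (hτ : IsStopIn ℱ T s τ) : Measurable τ :=
  measurable_of_isStoppingTime_coe hτ.1

lemma IsStopIn.min (hτ : IsStopIn ℱ T s τ) (hσ : IsStopIn ℱ T s σ) :
    IsStopIn ℱ T s (fun ω => min (τ ω) (σ ω)) :=
  ⟨isStoppingTime_coe_min hτ.1 hσ.1, fun ω => le_min (hτ.2.1 ω) (hσ.2.1 ω),
    fun ω => (min_le_left _ _).trans (hτ.2.2 ω)⟩

lemma IsStopIn.max (hτ : IsStopIn ℱ T s τ) (hσ : IsStopIn ℱ T S σ) :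
    IsStopIn ℱ T s (fun ω => max (τ ω) (σ ω)) :=
  ⟨isStoppingTime_coe_max hτ.1 hσ.1, fun ω => (hτ.2.1 ω).trans (le_max_left _ _),
    fun ω => max_le (hτ.2.2 ω) (hσ.2.2 ω)⟩

lemma IsStopIn.piecewise (hS : Stop0 ℱ T S) {A : Set Ω} [DecidablePred (· ∈ A)]
    (hA : MeasurableSet[hS.1.measurableSpace] A) (hτ : IsStopIn ℱ T S τ)
    (hσ : IsStopIn ℱ T S σ) : IsStopIn ℱ T S (A.piecewise τ σ) := by
  refine ⟨isStoppingTime_coe_iff.2 fun t => ?_, fun ω => ?_, fun ω => ?_⟩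
  · have hAS := (measurableSet_stoppingTime_coe_iff hS.1).1 hA t
    have hAS' := (measurableSet_stoppingTime_coe_iff hS.1).1 hA.compl t
    have : {ω | A.piecewise τ σ ω ≤ t} = (A ∩ {ω | S ω ≤ t}) ∩ {ω | τ ω ≤ t} ∪
        (Aᶜ ∩ {ω | S ω ≤ t}) ∩ {ω | σ ω ≤ t} := by
      ext ω
      by_cases h : ω ∈ A <;> simp [Set.piecewise, h]
      · exact fun h' => (hτ.2.1 ω).trans h'
      · exact fun h' => (hσ.2.1 ω).trans h'
    rw [this]
    exact (hAS.inter (isStoppingTime_coe_iff.1 hτ.1 t)).union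
      (hAS'.inter (isStoppingTime_coe_iff.1 hσ.1 t))
  · by_cases h : ω ∈ A <;> simp [Set.piecewise, h, hτ.2.1 ω, hσ.2.1 ω]
  · by_cases h : ω ∈ A <;> simp [Set.piecewise, h, hτ.2.2 ω, hσ.2.2 ω]

lemma IsStopIn.iInf (hrcf : RightContinuousFiltration ℱ) {τs : ℕ → Ω → ℝ}
    (hτs : ∀ n, IsStopIn ℱ T S (τs n)) : IsStopIn ℱ T S (fun ω => ⨅ n, τs n ω) :=
  have hbdd : ∀ ω, BddBelow (range (τs · ω)) :=
    fun ω => ⟨S ω, by rintro _ ⟨n, rfl⟩; exact (hτs n).2.1 ω⟩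
  ⟨isStoppingTime_iInf hrcf (fun n => (hτs n).1) hbdd, fun ω => le_ciInf fun n => (hτs n).2.1 ω,
    fun ω => (ciInf_le (hbdd ω) 0).trans ((hτs 0).2.2 ω)⟩

lemma IsStopIn.iSup {τs : ℕ → Ω → ℝ} (hτs : ∀ n, IsStopIn ℱ T S (τs n)) :
    IsStopIn ℱ T S (fun ω => ⨆ n, τs n ω) :=
  have hbdd : ∀ ω, BddAbove (range (τs · ω)) :=
    fun ω => ⟨T, by rintro _ ⟨n, rfl⟩; exact (hτs n).2.2 ω⟩
  ⟨isStoppingTime_iSup (fun n => (hτs n).1) hbdd,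
    fun ω => ((hτs 0).2.1 ω).trans (le_ciSup (hbdd ω) 0), fun ω => ciSup_le fun n => (hτs n).2.2 ω⟩

lemma Stop0.zero_le_T [Nonempty Ω] (hτ : Stop0 ℱ T τ) : 0 ≤ T :=
  let ω := Classical.arbitrary Ω
  (hτ.2.1 ω).trans (hτ.2.2 ω)

lemma IsStopIn.ae_tendsto_iSup {τs : ℕ → Ω → ℝ} (hτs : ∀ n, IsStopIn ℱ T S (τs n))
    (hmono : ∀ n, τs n ≤ᵐ[μ] τs (n + 1)) :
    ∀ᵐ ω ∂μ, Monotone (τs · ω) ∧ Tendsto (τs · ω) atTop (𝓝 (⨆ n, τs n ω)) := by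
  filter_upwards [ae_all_iff.2 hmono] with ω h
  have hmono : Monotone (τs · ω) := monotone_nat_of_le_succ h
  exact ⟨hmono, tendsto_atTop_ciSup hmono ⟨T, by rintro _ ⟨n, rfl⟩; exact (hτs n).2.2 ω⟩⟩

end StoppingTimes

namespace FExp

variable (𝔈 : FExp μ T ℱ)

def DomPos : Set (Ω → ℝ) := {ξ | ξ ∈ 𝔈.Dom ∧ 0 ≤ᵐ[μ] ξ}

variable {𝔈} {τ ρ₁ ρ₂ ξ η : Ω → ℝ}

lemma const_mem_domPos {c : ℝ} (hc : 0 ≤ c) : (fun _ => c) ∈ 𝔈.DomPos :=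
  ⟨𝔈.const_mem c, .of_forall fun _ => hc⟩

lemma add_mem_domPos (hξ : ξ ∈ 𝔈.DomPos) (hη : η ∈ 𝔈.DomPos) : ξ + η ∈ 𝔈.DomPos :=
  ⟨𝔈.add_mem hξ.1 hη.1, by filter_upwards [hξ.2, hη.2] with ω h1 h2 using add_nonneg h1 h2⟩

lemma add_const_mem_domPos (hξ : ξ ∈ 𝔈.DomPos) {c : ℝ} (hc : 0 ≤ c) :
    (fun ω => ξ ω + c) ∈ 𝔈.DomPos :=
  add_mem_domPos hξ (const_mem_domPos hc)

lemma indicator_mem_domPos (hξ : ξ ∈ 𝔈.DomPos) {A : Set Ω} (hA : MeasurableSet A) :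
    A.indicator ξ ∈ 𝔈.DomPos :=
  ⟨𝔈.indicator_mem hξ.1 hA, by
    filter_upwards [hξ.2] with ω h using indicator_nonneg (fun _ _ => h) ω⟩

lemma mem_domPos_of_le (hη : η ∈ 𝔈.Dom) (h : ∀ᵐ ω ∂μ, 0 ≤ ξ ω ∧ ξ ω ≤ η ω) :
    ξ ∈ 𝔈.DomPos :=
  ⟨𝔈.sandwich_mem hη h, by filter_upwards [h] with ω hω using hω.1⟩

/-- `Dom⁺(E)` is closed under a.e. modification, by (H5) applied to a constant sequence. -/
lemma mem_domPos_of_ae_eq (hξ : ξ ∈ 𝔈.DomPos) (h : η =ᵐ[μ] ξ) : η ∈ 𝔈.DomPos := by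
  refine ⟨𝔈.h5 (ξ := fun _ => ξ) (fun _ => hξ.1) (fun _ => hξ.2) ?_
    ⟨𝔈.E0 ξ, .of_forall fun _ => le_rfl⟩, ?_⟩
  · filter_upwards [h] with ω hω using hω ▸ tendsto_const_nhds
  · filter_upwards [h, hξ.2] with ω h1 h2 using h1 ▸ h2

lemma const_mul_mem_domPos (hξ : ξ ∈ 𝔈.DomPos) {l : ℝ} (hl : 0 ≤ l) :
    (fun ω => l * ξ ω) ∈ 𝔈.DomPos := by
  have hnat : ∀ n : ℕ, (fun ω => (n : ℝ) * ξ ω) ∈ 𝔈.DomPos := by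
    intro n
    induction n with
    | zero => simpa using const_mem_domPos (𝔈 := 𝔈) le_rfl
    | succ k ih =>
      convert add_mem_domPos ih hξ using 1
      ext ω
      simp only [Pi.add_apply, Nat.cast_succ]
      ring
  obtain ⟨n, hn⟩ := exists_nat_ge l
  refine mem_domPos_of_le (hnat n).1 ?_
  filter_upwards [hξ.2] with ω h0
  exact ⟨mul_nonneg hl h0, mul_le_mul_of_nonneg_right hn h0⟩

lemma cond_mem_domPos (hτ : Stop0 ℱ T τ) (hξ : ξ ∈ 𝔈.DomPos) : 𝔈.cond τ ξ ∈ 𝔈.DomPos :=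
  ⟨𝔈.cond_mem hτ hξ.1 hξ.2, 𝔈.cond_nonneg hτ hξ.1 hξ.2⟩

lemma measurable_cond (hτ : Stop0 ℱ T τ) (hξ : ξ ∈ 𝔈.DomPos) : Measurable (𝔈.cond τ ξ) :=
  (𝔈.cond_adapted hτ hξ.1 hξ.2).mono hτ.1.measurableSpace_le le_rfl

lemma cond_mono (hτ : Stop0 ℱ T τ) (hξ : ξ ∈ 𝔈.DomPos) (hη : η ∈ 𝔈.DomPos) (h : ξ ≤ᵐ[μ] η) :
    𝔈.cond τ ξ ≤ᵐ[μ] 𝔈.cond τ η :=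
  𝔈.mono hτ hξ.1 hξ.2 hη.1 hη.2 h

lemma cond_congr (hτ : Stop0 ℱ T τ) (hξ : ξ ∈ 𝔈.DomPos) (h : η =ᵐ[μ] ξ) :
    𝔈.cond τ η =ᵐ[μ] 𝔈.cond τ ξ :=
  have hη := mem_domPos_of_ae_eq hξ h
  (cond_mono hτ hη hξ h.le).antisymm (cond_mono hτ hξ hη h.symm.le)

lemma cond_indicator (hτ : Stop0 ℱ T τ) (hξ : ξ ∈ 𝔈.DomPos) {A : Set Ω}
    (hA : MeasurableSet[hτ.1.measurableSpace] A) :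
    𝔈.cond τ (A.indicator ξ) =ᵐ[μ] A.indicator (𝔈.cond τ ξ) :=
  𝔈.zero_one hτ hξ.1 hξ.2 hA

lemma cond_zero (hτ : Stop0 ℱ T τ) : 𝔈.cond τ (fun _ => 0) =ᵐ[μ] fun _ => 0 := by
  simpa using cond_indicator hτ (const_mem_domPos (𝔈 := 𝔈) le_rfl)
    (@MeasurableSet.empty _ hτ.1.measurableSpace)

lemma cond_of_measurable (hτ : Stop0 ℱ T τ) (hη : η ∈ 𝔈.DomPos)
    (hmeas : Measurable[hτ.1.measurableSpace] η) : 𝔈.cond τ η =ᵐ[μ] η := by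
  have h := 𝔈.translation hτ 𝔈.zero_mem (.of_forall fun _ => le_rfl) hη.1 hη.2 hmeas
  rw [show (fun _ => (0 : ℝ)) + η = η from zero_add η] at h
  filter_upwards [h, cond_zero (𝔈 := 𝔈) hτ] with ω h1 h2
  simp [h1, h2]

lemma cond_piecewise (hτ : Stop0 ℱ T τ) (hξ : ξ ∈ 𝔈.DomPos) (hη : η ∈ 𝔈.DomPos) {A : Set Ω}
    [DecidablePred (· ∈ A)] (hA : MeasurableSet[hτ.1.measurableSpace] A) :
    𝔈.cond τ (A.piecewise ξ η) =ᵐ[μ] A.piecewise (𝔈.cond τ ξ) (𝔈.cond τ η) := by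
  have hAm : MeasurableSet A := hτ.1.measurableSpace_le _ hA
  have hmem : A.piecewise ξ η ∈ 𝔈.DomPos := by
    rw [← indicator_add_compl_eq_piecewise]
    exact add_mem_domPos (indicator_mem_domPos hξ hAm) (indicator_mem_domPos hη hAm.compl)
  have e1 : A.indicator (A.piecewise ξ η) = A.indicator ξ := by
    ext ω; by_cases h : ω ∈ A <;> simp [h]
  have e2 : Aᶜ.indicator (A.piecewise ξ η) = Aᶜ.indicator η := by
    ext ω; by_cases h : ω ∈ A <;> simp [h]
  filter_upwards [cond_indicator hτ hmem hA, cond_indicator hτ hmem hA.compl,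
    cond_indicator hτ hξ hA, cond_indicator hτ hη hA.compl] with ω h1 h2 h3 h4
  rw [e1, h3] at h1
  rw [e2, h4] at h2
  by_cases h : ω ∈ A
  · simpa [h] using h1.symm
  · simpa [h] using h2.symm

lemma indicator_cond_eq_of_eqOn (hκ : Stop0 ℱ T κ) (hρ : Stop0 ℱ T ρ) (hle : ∀ ω, κ ω ≤ ρ ω)
    (hξ : ξ ∈ 𝔈.DomPos) {E : Set Ω} (hE : MeasurableSet[hρ.1.measurableSpace] E)
    (heq : ∀ ω ∈ E, κ ω = ρ ω) :
    E.indicator (𝔈.cond ρ ξ) =ᵐ[μ] E.indicator (𝔈.cond κ ξ) := by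
  have hEκ := measurableSet_of_eqOn hρ.1 hκ.1 hE heq
  have hmeas : Measurable[hκ.1.measurableSpace] (E.indicator (𝔈.cond ρ ξ)) :=
    measurable_indicator_of_le_on hρ.1 hκ.1 (𝔈.cond_adapted hρ hξ.1 hξ.2) hEκ
      fun ω hω => (heq ω hω).ge
  have hcond := cond_mem_domPos hρ hξ
  have hself := cond_of_measurable hκ
    (indicator_mem_domPos hcond (hκ.1.measurableSpace_le _ hEκ)) hmeas
  filter_upwards [hself, cond_indicator hκ hcond hEκ,
    𝔈.time_consistent hκ hρ hle hξ.1 hξ.2] with ω h1 h2 h3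
  rw [← h1, h2]
  by_cases h : ω ∈ E <;> simp [h, h3]

lemma cond_eq_of_eq (hρ₁ : Stop0 ℱ T ρ₁) (hρ₂ : Stop0 ℱ T ρ₂) (hξ : ξ ∈ 𝔈.DomPos) :
    ∀ᵐ ω ∂μ, ρ₁ ω = ρ₂ ω → 𝔈.cond ρ₁ ξ ω = 𝔈.cond ρ₂ ξ ω := by
  have hκ : Stop0 ℱ T (fun ω => min (ρ₁ ω) (ρ₂ ω)) := hρ₁.min hρ₂
  have hE₂ : MeasurableSet[hρ₂.1.measurableSpace] {ω | ρ₁ ω = ρ₂ ω} := by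
    simpa only [eq_comm] using measurableSet_eq_coe hρ₂.1 hρ₁.1
  filter_upwards [indicator_cond_eq_of_eqOn hκ hρ₁ (fun _ => min_le_left _ _) hξ
      (measurableSet_eq_coe hρ₁.1 hρ₂.1) (fun ω h => min_eq_left (le_of_eq h)),
    indicator_cond_eq_of_eqOn hκ hρ₂ (fun _ => min_le_right _ _) hξ hE₂
      (fun ω h => min_eq_right (ge_of_eq h))] with ω h1 h2 hω
  simpa [indicator_of_mem (show ω ∈ {ω | ρ₁ ω = ρ₂ ω} from hω)] using h1.trans h2.symm

lemma ae_eq_of_E0_eq (hT : 0 ≤ T) (hξ : ξ ∈ 𝔈.DomPos) (hη : η ∈ 𝔈.DomPos) (hle : ξ ≤ᵐ[μ] η)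
    (h : 𝔈.E0 ξ = 𝔈.E0 η) : ξ =ᵐ[μ] η := by
  refine 𝔈.strict_mono (stop0_const le_rfl hT) hξ.1 hξ.2 hη.1 hη.2 hle ?_
  filter_upwards [𝔈.E0_eq hξ.1 hξ.2, 𝔈.E0_eq hη.1 hη.2] with ω h1 h2
  rw [h1, h2, h]

section E0

variable [IsProbabilityMeasure μ]

lemma E0_mono (hT : 0 ≤ T) (hξ : ξ ∈ 𝔈.DomPos) (hη : η ∈ 𝔈.DomPos)
    (h : ξ ≤ᵐ[μ] η) :
    𝔈.E0 ξ ≤ 𝔈.E0 η :=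
  (Filter.eventually_const (f := ae μ)).1 <| by
    filter_upwards [𝔈.E0_eq hξ.1 hξ.2, 𝔈.E0_eq hη.1 hη.2,
      cond_mono (stop0_const le_rfl hT) hξ hη h] with ω h1 h2 h3
    rwa [← h1, ← h2]

lemma E0_congr (hT : 0 ≤ T) (hξ : ξ ∈ 𝔈.DomPos) (h : η =ᵐ[μ] ξ) :
    𝔈.E0 η = 𝔈.E0 ξ :=
  have hη := mem_domPos_of_ae_eq hξ h
  (E0_mono hT hη hξ h.le).antisymm (E0_mono hT hξ hη h.symm.le)

lemma E0_zero (hT : 0 ≤ T) : 𝔈.E0 (fun _ => 0) = 0 :=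
  (Filter.eventually_const (f := ae μ)).1 <| by
    filter_upwards [𝔈.E0_eq 𝔈.zero_mem (.of_forall fun _ => le_rfl),
      cond_zero (𝔈 := 𝔈) (stop0_const le_rfl hT)] with ω h1 h2
    rw [← h1, h2]

lemma E0_add_const (hT : 0 ≤ T) (hξ : ξ ∈ 𝔈.DomPos) {c : ℝ} (hc : 0 ≤ c) :
    𝔈.E0 (fun ω => ξ ω + c) = 𝔈.E0 ξ + c := by
  have h0 := stop0_const (ℱ := ℱ) le_rfl hT
  have hξc := add_const_mem_domPos hξ hc
  refine (Filter.eventually_const (f := ae μ)).1 ?_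
  filter_upwards [𝔈.E0_eq hξc.1 hξc.2, 𝔈.E0_eq hξ.1 hξ.2,
    𝔈.translation h0 hξ.1 hξ.2 (𝔈.const_mem c) (.of_forall fun _ => hc)
      (@measurable_const ℝ Ω _ h0.1.measurableSpace c)] with ω h1 h2 h3
  rw [← h1, ← h2]
  exact h3

lemma E0_add_le (hT : 0 ≤ T) (h6 : 𝔈.Subadditive) (hξ : ξ ∈ 𝔈.DomPos)
    (hη : η ∈ 𝔈.DomPos) :
    𝔈.E0 (ξ + η) ≤ 𝔈.E0 ξ + 𝔈.E0 η := by
  have hξη := add_mem_domPos hξ hη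
  refine (Filter.eventually_const (f := ae μ)).1 ?_
  filter_upwards [𝔈.E0_eq hξη.1 hξη.2, 𝔈.E0_eq hξ.1 hξ.2, 𝔈.E0_eq hη.1 hη.2,
    h6 (stop0_const le_rfl hT) hξ.1 hξ.2 hη.1 hη.2] with ω h1 h2 h3 h4
  rw [← h1, ← h2, ← h3]
  exact h4

lemma E0_const_mul (hT : 0 ≤ T) (h7 : 𝔈.PosHom) (hξ : ξ ∈ 𝔈.DomPos)
    {l : ℝ} (hl : 0 ≤ l) :
    𝔈.E0 (fun ω => l * ξ ω) = l * 𝔈.E0 ξ := by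
  have hlξ := const_mul_mem_domPos hξ hl
  refine (Filter.eventually_const (f := ae μ)).1 ?_
  filter_upwards [𝔈.E0_eq hlξ.1 hlξ.2, 𝔈.E0_eq hξ.1 hξ.2,
    h7 l hl (stop0_const le_rfl hT) hξ.1 hξ.2] with ω h1 h2 h3
  rw [← h1, ← h2]
  exact h3

lemma E0_cond (hτ : Stop0 ℱ T τ) (hξ : ξ ∈ 𝔈.DomPos) :
    𝔈.E0 (𝔈.cond τ ξ) = 𝔈.E0 ξ := by
  have := nonempty_of_isProbabilityMeasure μ
  have hc := cond_mem_domPos hτ hξ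
  refine (Filter.eventually_const (f := ae μ)).1 ?_
  filter_upwards [𝔈.E0_eq hc.1 hc.2, 𝔈.E0_eq hξ.1 hξ.2,
    𝔈.time_consistent (stop0_const le_rfl hτ.zero_le_T) hτ hτ.2.1 hξ.1 hξ.2] with ω h1 h2 h3
  rw [← h1, ← h2, h3]

lemma tendsto_E0_indicator (hT : 0 ≤ T) (hζ : ζ ∈ 𝔈.DomPos)
    {A : ℕ → Set Ω} (hA : ∀ n, MeasurableSet (A n))
    (hanti : Antitone A) (hnull : ∀ᵐ ω ∂μ, ω ∉ ⋂ n, A n) :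
    Tendsto (fun n => 𝔈.E0 ((A n).indicator ζ)) atTop (𝓝 0) := by
  have h := 𝔈.h2 𝔈.zero_mem (.of_forall fun _ => le_rfl) hζ.1 hζ.2 hA hanti hnull
  simpa only [E0_zero hT, fun n => show (fun _ => (0 : ℝ)) + (A n).indicator ζ = _ from zero_add _]
    using h

lemma E0_le_add_indicator_compl (hT : 0 ≤ T) (h6 : 𝔈.Subadditive) (hξ : ξ ∈ 𝔈.DomPos)
    (hζ : ζ ∈ 𝔈.DomPos) {B : Set Ω} (hB : MeasurableSet B) {δ : ℝ} (hδ : 0 ≤ δ)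
    (h : ∀ᵐ ω ∂μ, ω ∈ B → ζ ω ≤ ξ ω + δ) :
    𝔈.E0 ζ ≤ 𝔈.E0 ξ + 𝔈.E0 (Bᶜ.indicator ζ) + δ := by
  have hind := indicator_mem_domPos hζ hB.compl
  have hsum := add_mem_domPos hξ hind
  calc 𝔈.E0 ζ ≤ 𝔈.E0 (fun ω => (ξ + Bᶜ.indicator ζ) ω + δ) := by
        refine E0_mono hT hζ (add_const_mem_domPos hsum hδ) ?_
        filter_upwards [h, hξ.2] with ω h h0
        by_cases hω : ω ∈ B
        · simp only [Pi.add_apply, indicator_of_notMem (notMem_compl_iff.2 hω)]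
          linarith [h hω]
        · simp only [Pi.add_apply, indicator_of_mem (mem_compl hω)]
          linarith [show 0 ≤ ξ ω from h0]
    _ ≤ _ := by
        rw [E0_add_const hT hsum hδ]
        linarith [E0_add_le hT h6 hξ hind]

/-- Monotone convergence: outside `B j = ⋃ i ≤ j, {ζ - δ ≤ ξ i}` the contribution of `ζ`
vanishes by (H2), and sub-additivity splits `ζ ≤ ξ j + 𝟙_{(B j)ᶜ} ζ + δ`. -/
lemma tendsto_E0_of_monotone (hT : 0 ≤ T) (h6 : 𝔈.Subadditive)
    {ξ : ℕ → Ω → ℝ} (hξ : ∀ n, ξ n ∈ 𝔈.DomPos) (hmeas : ∀ n, Measurable (ξ n))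
    (hζ : ζ ∈ 𝔈.DomPos)
    (hconv : ∀ᵐ ω ∂μ, Monotone (ξ · ω) ∧ Tendsto (ξ · ω) atTop (𝓝 (ζ ω))) :
    Tendsto (fun n => 𝔈.E0 (ξ n)) atTop (𝓝 (𝔈.E0 ζ)) := by
  set ζ' : Ω → ℝ := fun ω => limsup (ξ · ω) atTop
  have hζ'ae : ζ' =ᵐ[μ] ζ := by filter_upwards [hconv] with ω h using h.2.limsup_eq
  have hζ' := mem_domPos_of_ae_eq hζ hζ'ae
  rw [← E0_congr hT hζ hζ'ae]
  have hle : ∀ n, 𝔈.E0 (ξ n) ≤ 𝔈.E0 ζ' := fun n => E0_mono hT (hξ n) hζ' (by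
    filter_upwards [hconv, hζ'ae] with ω h h' using h' ▸ h.1.ge_of_tendsto h.2 n)
  have hmono : ∀ {n k}, n ≤ k → 𝔈.E0 (ξ n) ≤ 𝔈.E0 (ξ k) := fun hnk =>
    E0_mono hT (hξ _) (hξ _) (by filter_upwards [hconv] with ω h using h.1 hnk)
  refine tendsto_order.2 ⟨fun a ha => ?_, fun b hb => .of_forall fun n => (hle n).trans_lt hb⟩
  obtain ⟨δ, hδ, haδ⟩ : ∃ δ > 0, a < 𝔈.E0 ζ' - 2 * δ :=
    ⟨(𝔈.E0 ζ' - a) / 4, by linarith, by linarith⟩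
  set B : ℕ → Set Ω := accumulate fun i => {ω | ζ' ω - δ ≤ ξ i ω}
  have hB : ∀ j, MeasurableSet (B j) := fun j => by
    simp only [B, accumulate_def]
    exact .biUnion (to_countable _) fun i _ =>
      measurableSet_le ((Measurable.limsup hmeas).sub_const δ) (hmeas i)
  have hnull : ∀ᵐ ω ∂μ, ω ∉ ⋂ j, (B j)ᶜ := by
    filter_upwards [hconv, hζ'ae] with ω h h'
    obtain ⟨j, hj⟩ := (h.2.eventually_const_lt (show ζ ω - δ < ζ ω by linarith)).exists
    simp only [mem_iInter, mem_compl_iff, not_forall, not_not]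
    exact ⟨j, subset_accumulate (show ζ' ω - δ ≤ ξ j ω by rw [h']; exact hj.le)⟩
  have hstep : ∀ j, 𝔈.E0 ζ' ≤ 𝔈.E0 (ξ j) + 𝔈.E0 ((B j)ᶜ.indicator ζ') + δ := fun j =>
    E0_le_add_indicator_compl hT h6 (hξ j) hζ' (hB j) hδ.le (by
      filter_upwards [hconv] with ω h hω
      obtain ⟨i, hij, hi⟩ := mem_accumulate.1 hω
      linarith [h.1 hij, show ζ' ω - δ ≤ ξ i ω from hi])
  obtain ⟨j, hj⟩ := ((tendsto_E0_indicator hT hζ' (fun j => (hB j).compl)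
    (fun _ _ h => compl_subset_compl.2 (monotone_accumulate h)) hnull).eventually_lt_const
      hδ).exists
  filter_upwards [eventually_ge_atTop j] with n hn
  linarith [hstep j, hmono hn]

end E0

end FExp

section EssSup

lemma norm_arctan_le (x : ℝ) : ‖Real.arctan x‖ ≤ Real.pi / 2 := by
  rw [Real.norm_eq_abs, abs_le]
  exact ⟨(Real.neg_pi_div_two_lt_arctan x).le, (Real.arctan_lt_pi_div_two x).le⟩

variable [IsFiniteMeasure μ]

lemma integrable_arctan_comp {f : Ω → ℝ} (hf : AEStronglyMeasurable f μ) :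
    Integrable (fun ω => Real.arctan (f ω)) μ :=
  .of_bound (Real.continuous_arctan.comp_aestronglyMeasurable hf) (Real.pi / 2)
    (.of_forall fun ω => norm_arctan_le (f ω))

lemma tendsto_integral_arctan {f : ℕ → Ω → ℝ} {F : Ω → ℝ}
    (hf : ∀ n, AEStronglyMeasurable (f n) μ)
    (h : ∀ᵐ ω ∂μ, Tendsto (f · ω) atTop (𝓝 (F ω))) :
    Tendsto (fun n => ∫ ω, Real.arctan (f n ω) ∂μ) atTop (𝓝 (∫ ω, Real.arctan (F ω) ∂μ)) :=
  tendsto_integral_of_dominated_convergence (fun _ => Real.pi / 2)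
    (fun n => Real.continuous_arctan.comp_aestronglyMeasurable (hf n)) (integrable_const _)
    (fun n => .of_forall fun ω => norm_arctan_le (f n ω))
    (by filter_upwards [h] with ω hω using (Real.continuous_arctan.tendsto _).comp hω)

lemma ae_le_of_integral_arctan_max_le {f g : Ω → ℝ} (hf : AEStronglyMeasurable f μ)
    (hg : AEStronglyMeasurable g μ)
    (h : ∫ ω, Real.arctan (max (f ω) (g ω)) ∂μ ≤ ∫ ω, Real.arctan (f ω) ∂μ) : g ≤ᵐ[μ] f := by
  have hmax : Integrable (fun ω => Real.arctan (max (f ω) (g ω))) μ :=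
    integrable_arctan_comp (hf.sup hg)
  have hf' := integrable_arctan_comp hf
  have hmono : ∀ ω, Real.arctan (f ω) ≤ Real.arctan (max (f ω) (g ω)) :=
    fun ω => Real.arctan_mono (le_max_left _ _)
  have hzero : (fun ω => Real.arctan (max (f ω) (g ω)) - Real.arctan (f ω)) =ᵐ[μ] 0 := by
    refine (integral_eq_zero_iff_of_nonneg (fun ω => sub_nonneg.2 (hmono ω))
      (hmax.sub hf')).1 ?_
    rw [integral_sub hmax hf']
    linarith [integral_mono hf' hmax hmono]
  filter_upwards [hzero] with ω hω
  exact max_eq_left_iff.1 (Real.arctan_injective (sub_eq_zero.1 hω))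

lemma bddAbove_integral_arctan (s : Set (Ω → ℝ)) :
    BddAbove ((fun f : Ω → ℝ => ∫ ω, Real.arctan (f ω) ∂μ) '' s) :=
  ⟨Real.pi / 2 * μ.real univ, by
    rintro _ ⟨f, -, rfl⟩
    exact (le_abs_self _).trans
      (norm_integral_le_of_norm_le_const (.of_forall fun ω => norm_arctan_le (f ω)))⟩

/-- Near-maximisers of `f ↦ ∫ arctan ∘ f`, made increasing by taking successive maxima. -/
lemma exists_seq_tendsto_sSup_integral_arctan {s : Set (Ω → ℝ)} (hne : s.Nonempty)
    (hmeas : ∀ f ∈ s, Measurable f) (hdir : ∀ f ∈ s, ∀ g ∈ s, ∃ h ∈ s, h =ᵐ[μ] f ⊔ g)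
    {b : Ω → ℝ} (hb : ∀ f ∈ s, f ≤ᵐ[μ] b) :
    ∃ fs : ℕ → Ω → ℝ, (∀ n, fs n ∈ s) ∧ (∀ᵐ ω ∂μ, ∀ n, fs n ω ≤ fs (n + 1) ω ∧ fs n ω ≤ b ω) ∧
      Tendsto (fun n => ∫ ω, Real.arctan (fs n ω) ∂μ) atTop
        (𝓝 (sSup ((fun f : Ω → ℝ => ∫ ω, Real.arctan (f ω) ∂μ) '' s))) := by
  classical
  set I : (Ω → ℝ) → ℝ := fun f => ∫ ω, Real.arctan (f ω) ∂μ
  set α := sSup (I '' s)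
  have hnear : ∀ n : ℕ, ∃ g ∈ s, α - 1 / (n + 1) < I g := fun n => by
    obtain ⟨_, ⟨g, hg, rfl⟩, hlt⟩ := exists_lt_of_lt_csSup (hne.image I)
      (sub_lt_self α (Nat.one_div_pos_of_nat (n := n)))
    exact ⟨g, hg, hlt⟩
  choose g hg hgI using hnear
  choose! u hu hu' using hdir
  set fs : ℕ → Ω → ℝ := fun n => Nat.rec (g 0) (fun n f => u f (g (n + 1))) n
  have hfs : ∀ n, fs n ∈ s := fun n => by
    induction n with
    | zero => exact hg 0
    | succ n ih => exact hu _ ih _ (hg (n + 1))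
  have hstep : ∀ᵐ ω ∂μ, ∀ n, fs n ω ≤ fs (n + 1) ω ∧ g (n + 1) ω ≤ fs (n + 1) ω ∧
      fs n ω ≤ b ω := by
    rw [ae_all_iff]
    intro n
    filter_upwards [hu' _ (hfs n) _ (hg (n + 1)), hb _ (hfs n)] with ω h hb
    simp only [fs, h, Pi.sup_apply]
    exact ⟨le_max_left _ _, le_max_right _ _, hb⟩
  refine ⟨fs, hfs, hstep.mono fun ω h n => ⟨(h n).1, (h n).2.2⟩, ?_⟩
  have hlow : Tendsto (fun n : ℕ => α - 1 / ((n : ℝ) + 1)) atTop (𝓝 α) := by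
    simpa using tendsto_const_nhds.sub (tendsto_one_div_add_atTop_nhds_zero_nat (𝕜 := ℝ))
  refine tendsto_of_tendsto_of_tendsto_of_le_of_le hlow tendsto_const_nhds (fun n => ?_)
    (fun n => le_csSup (bddAbove_integral_arctan s) ⟨_, hfs n, rfl⟩)
  rcases n with _ | n
  · exact (hgI 0).le
  · refine (hgI (n + 1)).le.trans (integral_mono_ae
      (integrable_arctan_comp (hmeas _ (hg _)).aestronglyMeasurable)
      (integrable_arctan_comp (hmeas _ (hfs (n + 1))).aestronglyMeasurable) ?_)
    filter_upwards [hstep] with ω h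
    exact Real.arctan_mono (h n).2.1

/-- The limit of the near-maximisers dominates the family: otherwise adjoining a member would
raise `∫ arctan` above its supremum. -/
lemma exists_monotone_seq_of_directed {s : Set (Ω → ℝ)} (hne : s.Nonempty)
    (hmeas : ∀ f ∈ s, Measurable f) (hdir : ∀ f ∈ s, ∀ g ∈ s, ∃ h ∈ s, h =ᵐ[μ] f ⊔ g)
    {b : Ω → ℝ} (hb : ∀ f ∈ s, f ≤ᵐ[μ] b) :
    ∃ fs : ℕ → Ω → ℝ, (∀ n, fs n ∈ s) ∧ ∃ L : Ω → ℝ,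
      (∀ᵐ ω ∂μ, Monotone (fs · ω) ∧ Tendsto (fs · ω) atTop (𝓝 (L ω))) ∧
        ∀ f ∈ s, f ≤ᵐ[μ] L := by
  obtain ⟨fs, hfs, hstep, hlim⟩ := exists_seq_tendsto_sSup_integral_arctan hne hmeas hdir hb
  set L : Ω → ℝ := fun ω => limsup (fs · ω) atTop
  have hconv : ∀ᵐ ω ∂μ, Monotone (fs · ω) ∧ Tendsto (fs · ω) atTop (𝓝 (L ω)) := by
    filter_upwards [hstep] with ω h
    have hmono : Monotone (fs · ω) := monotone_nat_of_le_succ fun n => (h n).1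
    have ht := tendsto_atTop_ciSup hmono ⟨b ω, by rintro _ ⟨n, rfl⟩; exact (h n).2⟩
    have hL : L ω = ⨆ n, fs n ω := ht.limsup_eq
    exact ⟨hmono, hL ▸ ht⟩
  have hL :
      ∫ ω, Real.arctan (L ω) ∂μ = sSup ((fun f : Ω → ℝ => ∫ ω, Real.arctan (f ω) ∂μ) '' s) :=
    tendsto_nhds_unique (tendsto_integral_arctan
      (fun n => (hmeas _ (hfs n)).aestronglyMeasurable) (hconv.mono fun ω h => h.2)) hlim
  refine ⟨fs, hfs, L, hconv, fun f hf => ae_le_of_integral_arctan_max_le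
    (Measurable.limsup fun n => hmeas _ (hfs n)).aestronglyMeasurable
    (hmeas f hf).aestronglyMeasurable ?_⟩
  have hmax : ∀ n, ∫ ω, Real.arctan (max (fs n ω) (f ω)) ∂μ ≤ ∫ ω, Real.arctan (L ω) ∂μ :=
    fun n => by
      obtain ⟨h, hh, heq⟩ := hdir _ (hfs n) f hf
      rw [hL, integral_congr_ae (g := fun ω => Real.arctan (h ω))
        (by filter_upwards [heq] with ω h' using by simp [h'])]
      exact le_csSup (bddAbove_integral_arctan s) ⟨h, hh, rfl⟩
  exact le_of_tendsto' (tendsto_integral_arctan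
    (fun n => ((hmeas _ (hfs n)).max (hmeas f hf)).aestronglyMeasurable)
    (by filter_upwards [hconv] with ω h using h.2.max tendsto_const_nhds)) hmax

end EssSup

lemma IsEssInfFam.ae_eq {s : Set (Ω → ℝ)} {g₁ g₂ : Ω → ℝ} (h₁ : IsEssInfFam μ s g₁)
    (h₂ : IsEssInfFam μ s g₂) : g₁ =ᵐ[μ] g₂ :=
  (h₂.2 g₁ h₁.1).antisymm (h₁.2 g₂ h₂.1)

lemma isEssSupFam_add_const {ι : Type*} {p : ι → Prop} {f : ι → Ω → ℝ} {g : Ω → ℝ} (c : ℝ)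
    (h : IsEssSupFam μ {k | ∃ i, p i ∧ k = fun ω => f i ω - c} g) :
    IsEssSupFam μ {k | ∃ i, p i ∧ k = f i} (fun ω => g ω + c) := by
  refine ⟨?_, fun k hk => ?_⟩
  · rintro _ ⟨i, hi, rfl⟩
    filter_upwards [h.1 _ ⟨i, hi, rfl⟩] with ω hω
    linarith [show f i ω - c ≤ g ω from hω]
  · filter_upwards [h.2 (fun ω => k ω - c) (by
      rintro _ ⟨i, hi, rfl⟩
      filter_upwards [hk _ ⟨i, hi, rfl⟩] with ω hω
      linarith [show f i ω ≤ k ω from hω])] with ω hω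
    linarith [show g ω ≤ k ω - c from hω]

omit m in
/-- `X'(τ) + 1 = 𝟙_{θ ≤ τ} (X(τ) + 1)`: the modified reward, shifted into `Dom⁺(E)`. -/
def modifiedReward (X : (Ω → ℝ) → Ω → ℝ) (θ τ : Ω → ℝ) : Ω → ℝ :=
  {ω | θ ω ≤ τ ω}.indicator fun ω => X τ ω + 1

/-- `W` stands for the shifted value `v' + 1`. -/
structure ModifiedProblem (μ : Measure Ω) (T : ℝ) (ℱ : Filtration ℝ m) where
  E : FExp μ T ℱ
  subadditive : E.Subadditive
  posHom : E.PosHom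
  X : (Ω → ℝ) → Ω → ℝ
  admissible : Admissible E X
  ce : CE E X
  bdd : BddRewardE0 E X
  θ : Ω → ℝ
  stop0_θ : Stop0 ℱ T θ
  W : (Ω → ℝ) → Ω → ℝ
  isValueFam : IsValueFam E (modifiedReward X θ) W
  complete : CompleteFiltration μ ℱ
  rightContinuous : RightContinuousFiltration ℱ

omit m in
lemma add_one_eq_modifiedReward {X X' : (Ω → ℝ) → Ω → ℝ} {θ : Ω → ℝ}
    (hX' : ∀ τ : Ω → ℝ, X' τ = fun ω => if θ ω ≤ τ ω then X τ ω else -1) (τ : Ω → ℝ) :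
    (fun ω => X' τ ω + 1) = modifiedReward X θ τ := by
  ext ω
  by_cases h : θ ω ≤ τ ω <;> simp [modifiedReward, hX', h]

namespace ModifiedProblem

variable (P : ModifiedProblem μ T ℱ) {τ σ σ₁ σ₂ κ ρ ρ₁ ρ₂ ρlam S : Ω → ℝ} {lam : ℝ}

def Y (τ : Ω → ℝ) : Ω → ℝ := modifiedReward P.X P.θ τ

lemma X_mem_domPos (hτ : Stop0 ℱ T τ) : P.X τ ∈ P.E.DomPos :=
  ⟨(P.admissible.1 τ hτ).1, (P.admissible.1 τ hτ).2.1⟩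

lemma Y_mem_domPos (hτ : Stop0 ℱ T τ) : P.Y τ ∈ P.E.DomPos :=
  FExp.indicator_mem_domPos (FExp.add_const_mem_domPos (P.X_mem_domPos hτ) zero_le_one)
    (measurableSet_le (measurable_of_isStoppingTime_coe P.stop0_θ.1) hτ.measurable)

lemma measurable_Y (hτ : Stop0 ℱ T τ) : Measurable[hτ.1.measurableSpace] (P.Y τ) :=
  ((P.admissible.1 τ hτ).2.2.add_const 1).indicator (measurableSet_le_coe P.stop0_θ.1 hτ.1)

lemma Y_of_lt {ω : Ω} (h : τ ω < P.θ ω) : P.Y τ ω = 0 := by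
  simp [Y, modifiedReward, not_le.2 h]

lemma Y_of_le {ω : Ω} (h : P.θ ω ≤ τ ω) : P.Y τ ω = P.X τ ω + 1 := by
  simp [Y, modifiedReward, h]

lemma Y_eq_of_eq (hτ : Stop0 ℱ T τ) (hσ : Stop0 ℱ T σ) :
    ∀ᵐ ω ∂μ, τ ω = σ ω → P.Y τ ω = P.Y σ ω := by
  filter_upwards [P.admissible.2 τ σ hτ hσ] with ω hX he
  simp only [Y, modifiedReward, he, indicator_apply, mem_ofPred_eq, hX he]

lemma Y_congr (hτ : Stop0 ℱ T τ) (hσ : Stop0 ℱ T σ) (h : τ =ᵐ[μ] σ) : P.Y τ =ᵐ[μ] P.Y σ := by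
  filter_upwards [P.Y_eq_of_eq hτ hσ, h] with ω h1 h2 using h1 h2

lemma Y_le (hτ : Stop0 ℱ T τ) : P.Y τ ≤ᵐ[μ] fun ω => P.X τ ω + 1 := by
  filter_upwards [(P.X_mem_domPos hτ).2] with ω h0
  rcases le_or_gt (P.θ ω) (τ ω) with h | h
  · rw [P.Y_of_le h]
  · rw [P.Y_of_lt h]
    linarith [show 0 ≤ P.X τ ω from h0]

/-- The set `D^λ_S` of the paper, written for the shifted reward and value. -/
def lamSet (lam : ℝ) (S : Ω → ℝ) : Set (Ω → ℝ) :=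
  {τ | IsStopIn ℱ T S τ ∧ (fun ω => lam * P.W τ ω) ≤ᵐ[μ] P.Y τ}

/-- The set `D_S` of the paper: the stopping times in `S_S` at which `v' = X'`. -/
def stopSet (S : Ω → ℝ) : Set (Ω → ℝ) :=
  {τ | IsStopIn ℱ T S τ ∧ P.W τ =ᵐ[μ] P.Y τ}

lemma cond_Y_le_W (hS : Stop0 ℱ T S) (hσ : IsStopIn ℱ T S σ) :
    P.E.cond S (P.Y σ) ≤ᵐ[μ] P.W S :=
  (P.isValueFam S hS).1 _ ⟨σ, hσ, rfl⟩

lemma W_le (hS : Stop0 ℱ T S) {g : Ω → ℝ}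
    (h : ∀ σ, IsStopIn ℱ T S σ → P.E.cond S (P.Y σ) ≤ᵐ[μ] g) : P.W S ≤ᵐ[μ] g :=
  (P.isValueFam S hS).2 g (by rintro _ ⟨σ, hσ, rfl⟩; exact h σ hσ)

lemma exists_cond_Y_eq_max (hS : Stop0 ℱ T S) (hσ₁ : IsStopIn ℱ T S σ₁)
    (hσ₂ : IsStopIn ℱ T S σ₂) : ∃ σ, IsStopIn ℱ T S σ ∧
      P.E.cond S (P.Y σ) =ᵐ[μ] P.E.cond S (P.Y σ₁) ⊔ P.E.cond S (P.Y σ₂) := by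
  classical
  have hY₁ := P.Y_mem_domPos (hσ₁.stop0 hS)
  have hY₂ := P.Y_mem_domPos (hσ₂.stop0 hS)
  set A := {ω | P.E.cond S (P.Y σ₂) ω ≤ P.E.cond S (P.Y σ₁) ω}
  have hA : MeasurableSet[hS.1.measurableSpace] A :=
    measurableSet_le (P.E.cond_adapted hS hY₂.1 hY₂.2) (P.E.cond_adapted hS hY₁.1 hY₁.2)
  have hσ := hσ₁.piecewise hS hA hσ₂
  refine ⟨_, hσ, ?_⟩
  have hYσ : P.Y (A.piecewise σ₁ σ₂) =ᵐ[μ] A.piecewise (P.Y σ₁) (P.Y σ₂) := by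
    filter_upwards [P.Y_eq_of_eq (hσ.stop0 hS) (hσ₁.stop0 hS),
      P.Y_eq_of_eq (hσ.stop0 hS) (hσ₂.stop0 hS)] with ω h₁ h₂
    by_cases h : ω ∈ A <;> simp [h, h₁, h₂]
  filter_upwards [FExp.cond_congr hS (P.Y_mem_domPos (hσ.stop0 hS)) hYσ.symm,
    FExp.cond_piecewise hS hY₁ hY₂ hA] with ω h₁ h₂
  rw [← h₁, h₂, Pi.sup_apply]
  by_cases h : ω ∈ A
  · simp [h, max_eq_left (show P.E.cond S (P.Y σ₂) ω ≤ _ from h)]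
  · simp [h, max_eq_right (le_of_not_ge (show ¬P.E.cond S (P.Y σ₂) ω ≤ _ from h))]

lemma cond_Y_le_W_of_le_on (hρ : Stop0 ℱ T ρ) (hσ : Stop0 ℱ T σ) {A : Set Ω}
    (hA : MeasurableSet[hρ.1.measurableSpace] A) (hle : ∀ ω ∈ A, ρ ω ≤ σ ω) :
    ∀ᵐ ω ∂μ, ω ∈ A → P.E.cond ρ (P.Y σ) ω ≤ P.W ρ ω := by
  classical
  set σ' := A.piecewise (fun ω => max (ρ ω) (σ ω)) fun _ => T
  have hσ' : IsStopIn ℱ T ρ σ' :=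
    ((IsStopIn.self hρ).max hσ).piecewise hρ hA (isStopIn_const_T hρ.2.2)
  have hσ'₀ := hσ'.stop0 hρ
  have hYσ := P.Y_mem_domPos hσ
  have hAm : MeasurableSet A := hρ.1.measurableSpace_le _ hA
  have hind : A.indicator (P.Y σ) =ᵐ[μ] A.indicator (P.Y σ') := by
    filter_upwards [P.Y_eq_of_eq hσ hσ'₀] with ω h
    by_cases hω : ω ∈ A
    · simpa [hω] using h (by simp [σ', hω, max_eq_right (hle ω hω)])
    · simp [hω]
  filter_upwards [FExp.cond_indicator hρ hYσ hA, FExp.cond_indicator hρ (P.Y_mem_domPos hσ'₀) hA,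
    FExp.cond_congr hρ (FExp.indicator_mem_domPos (P.Y_mem_domPos hσ'₀) hAm) hind,
    P.cond_Y_le_W hρ hσ'] with ω h₁ h₂ h₃ h₄ hω
  rw [indicator_of_mem hω] at h₁ h₂
  exact h₁ ▸ h₃ ▸ h₂.symm ▸ h₄

lemma Y_le_W (hτ : Stop0 ℱ T τ) : P.Y τ ≤ᵐ[μ] P.W τ := by
  filter_upwards [FExp.cond_of_measurable hτ (P.Y_mem_domPos hτ) (P.measurable_Y hτ),
    P.cond_Y_le_W hτ (IsStopIn.self hτ)] with ω h₁ h₂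
  exact h₁ ▸ h₂

variable [IsProbabilityMeasure μ]

lemma zero_le_T (P : ModifiedProblem μ T ℱ) : 0 ≤ T :=
  have := nonempty_of_isProbabilityMeasure μ
  Stop0.zero_le_T P.stop0_θ

lemma exists_E0_Y_le : ∃ C, ∀ τ, Stop0 ℱ T τ → P.E.E0 (P.Y τ) ≤ C := by
  obtain ⟨C, hC⟩ := P.bdd
  refine ⟨C + 1, fun τ hτ => ?_⟩
  have hX := P.X_mem_domPos hτ
  calc P.E.E0 (P.Y τ) ≤ P.E.E0 (fun ω => P.X τ ω + 1) :=
        FExp.E0_mono P.zero_le_T (P.Y_mem_domPos hτ) (FExp.add_const_mem_domPos hX zero_le_one)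
          (P.Y_le hτ)
    _ ≤ C + 1 := by rw [FExp.E0_add_const P.zero_le_T hX zero_le_one]; linarith [hC τ hτ]

lemma tendsto_E0_Y {τs : ℕ → Ω → ℝ} (hτs : ∀ n, Stop0 ℱ T (τs n)) (hτ : Stop0 ℱ T τ)
    (hθs : ∀ n, P.θ ≤ᵐ[μ] τs n) (hθ : P.θ ≤ᵐ[μ] τ)
    (hX : Tendsto (fun n => P.E.E0 (P.X (τs n))) atTop (𝓝 (P.E.E0 (P.X τ)))) :
    Tendsto (fun n => P.E.E0 (P.Y (τs n))) atTop (𝓝 (P.E.E0 (P.Y τ))) := by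
  have hE0 : ∀ {σ}, Stop0 ℱ T σ → P.θ ≤ᵐ[μ] σ → P.E.E0 (P.Y σ) = P.E.E0 (P.X σ) + 1 := by
    intro σ hσ hθσ
    rw [FExp.E0_congr P.zero_le_T (FExp.add_const_mem_domPos (P.X_mem_domPos hσ) zero_le_one)
      (by filter_upwards [hθσ] with ω h using P.Y_of_le h),
      FExp.E0_add_const P.zero_le_T (P.X_mem_domPos hσ) zero_le_one]
  simp only [hE0 (hτs _) (hθs _), hE0 hτ hθ]
  exact hX.add_const 1

lemma exists_seq_tendsto_W (hS : Stop0 ℱ T S) :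
    ∃ σs : ℕ → Ω → ℝ, (∀ n, IsStopIn ℱ T S (σs n)) ∧ ∀ᵐ ω ∂μ,
      Monotone (fun n => P.E.cond S (P.Y (σs n)) ω) ∧
        Tendsto (fun n => P.E.cond S (P.Y (σs n)) ω) atTop (𝓝 (P.W S ω)) := by
  set s := {g | ∃ σ, IsStopIn ℱ T S σ ∧ g = P.E.cond S (P.Y σ)}
  obtain ⟨fs, hfs, L, hconv, hL⟩ := exists_monotone_seq_of_directed (μ := μ) (s := s)
    ⟨_, _, isStopIn_const_T hS.2.2, rfl⟩
    (by rintro _ ⟨σ, hσ, rfl⟩; exact FExp.measurable_cond hS (P.Y_mem_domPos (hσ.stop0 hS)))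
    (by
      rintro _ ⟨σ₁, hσ₁, rfl⟩ _ ⟨σ₂, hσ₂, rfl⟩
      obtain ⟨σ, hσ, h⟩ := P.exists_cond_Y_eq_max hS hσ₁ hσ₂
      exact ⟨_, ⟨σ, hσ, rfl⟩, h⟩)
    (by rintro _ ⟨σ, hσ, rfl⟩; exact P.cond_Y_le_W hS hσ)
  choose σs hσs hfσ using hfs
  refine ⟨σs, hσs, ?_⟩
  have hWL : P.W S ≤ᵐ[μ] L := P.W_le hS fun σ hσ => hL _ ⟨σ, hσ, rfl⟩
  have hle : ∀ᵐ ω ∂μ, ∀ n, fs n ω ≤ P.W S ω :=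
    ae_all_iff.2 fun n => hfσ n ▸ P.cond_Y_le_W hS (hσs n)
  filter_upwards [hconv, hWL, hle] with ω h hW hle
  simp only [← hfσ]
  refine ⟨h.1, ?_⟩
  rw [le_antisymm hW (le_of_tendsto' h.2 hle)]
  exact h.2

lemma W_mem_domPos (hS : Stop0 ℱ T S) : P.W S ∈ P.E.DomPos := by
  obtain ⟨σs, hσs, hconv⟩ := P.exists_seq_tendsto_W hS
  obtain ⟨C, hC⟩ := P.exists_E0_Y_le
  have hmem := fun n => FExp.cond_mem_domPos hS (P.Y_mem_domPos ((hσs n).stop0 hS))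
  refine ⟨P.E.h5 (fun n => (hmem n).1) (fun n => (hmem n).2)
    (hconv.mono fun ω h => h.2) ⟨C, .of_forall fun n => ?_⟩, ?_⟩
  · rw [FExp.E0_cond hS (P.Y_mem_domPos ((hσs n).stop0 hS))]
    exact hC _ ((hσs n).stop0 hS)
  · filter_upwards [hconv, (hmem 0).2] with ω h h0
    exact h0.trans (h.1.ge_of_tendsto h.2 0)

lemma E0_Y_le_E0_W (hρ : Stop0 ℱ T ρ) (hσ : IsStopIn ℱ T ρ σ) :
    P.E.E0 (P.Y σ) ≤ P.E.E0 (P.W ρ) := by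
  have hY := P.Y_mem_domPos (hσ.stop0 hρ)
  rw [← FExp.E0_cond hρ hY]
  exact FExp.E0_mono P.zero_le_T (FExp.cond_mem_domPos hρ hY) (P.W_mem_domPos hρ)
    (P.cond_Y_le_W hρ hσ)

lemma E0_W_le (hρ : Stop0 ℱ T ρ) {b : ℝ} (h : ∀ σ, IsStopIn ℱ T ρ σ → P.E.E0 (P.Y σ) ≤ b) :
    P.E.E0 (P.W ρ) ≤ b := by
  obtain ⟨σs, hσs, hconv⟩ := P.exists_seq_tendsto_W hρ
  have hY := fun n => P.Y_mem_domPos ((hσs n).stop0 hρ)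
  refine le_of_tendsto' (FExp.tendsto_E0_of_monotone P.zero_le_T P.subadditive
    (fun n => FExp.cond_mem_domPos hρ (hY n)) (fun n => FExp.measurable_cond hρ (hY n))
    (P.W_mem_domPos hρ) hconv) fun n => ?_
  rw [FExp.E0_cond hρ (hY n)]
  exact h _ (hσs n)

lemma E0_W_anti (hρ₁ : Stop0 ℱ T ρ₁) (hρ₂ : Stop0 ℱ T ρ₂) (hle : ρ₁ ≤ᵐ[μ] ρ₂) :
    P.E.E0 (P.W ρ₂) ≤ P.E.E0 (P.W ρ₁) := by
  refine P.E0_W_le hρ₂ fun σ hσ => ?_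
  have hσ₀ := hσ.stop0 hρ₂
  have hσ' := (IsStopIn.self hρ₁).max hσ₀
  have heq : σ =ᵐ[μ] fun ω => max (ρ₁ ω) (σ ω) := by
    filter_upwards [hle] with ω h using (max_eq_right (h.trans (hσ.2.1 ω))).symm
  rw [FExp.E0_congr P.zero_le_T (P.Y_mem_domPos (hσ'.stop0 hρ₁))
    (P.Y_congr hσ₀ (hσ'.stop0 hρ₁) heq)]
  exact P.E0_Y_le_E0_W hρ₁ hσ'

lemma W_le_of_eq (hρ₁ : Stop0 ℱ T ρ₁) (hρ₂ : Stop0 ℱ T ρ₂) :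
    ∀ᵐ ω ∂μ, ρ₁ ω = ρ₂ ω → P.W ρ₁ ω ≤ P.W ρ₂ ω := by
  obtain ⟨σs, hσs, hconv⟩ := P.exists_seq_tendsto_W hρ₁
  have hE : MeasurableSet[hρ₂.1.measurableSpace] {ω | ρ₁ ω = ρ₂ ω} := by
    simpa only [eq_comm] using measurableSet_eq_coe hρ₂.1 hρ₁.1
  have hn : ∀ᵐ ω ∂μ, ∀ n, ρ₁ ω = ρ₂ ω → P.E.cond ρ₁ (P.Y (σs n)) ω ≤ P.W ρ₂ ω := by
    refine ae_all_iff.2 fun n => ?_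
    have hσ := (hσs n).stop0 hρ₁
    filter_upwards [FExp.cond_eq_of_eq hρ₁ hρ₂ (P.Y_mem_domPos hσ),
      P.cond_Y_le_W_of_le_on hρ₂ hσ hE fun ω h => h ▸ (hσs n).2.1 ω] with ω h₁ h₂ he
    exact (h₁ he).trans_le (h₂ he)
  filter_upwards [hconv, hn] with ω h hn he
  exact le_of_tendsto' h.2 fun n => hn n he

lemma W_eq_of_eq (hρ₁ : Stop0 ℱ T ρ₁) (hρ₂ : Stop0 ℱ T ρ₂) :
    ∀ᵐ ω ∂μ, ρ₁ ω = ρ₂ ω → P.W ρ₁ ω = P.W ρ₂ ω := by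
  filter_upwards [P.W_le_of_eq hρ₁ hρ₂, P.W_le_of_eq hρ₂ hρ₁] with ω h₁ h₂ he
  exact (h₁ he).antisymm (h₂ he.symm)

lemma W_congr (hρ₁ : Stop0 ℱ T ρ₁) (hρ₂ : Stop0 ℱ T ρ₂) (h : ρ₁ =ᵐ[μ] ρ₂) :
    P.W ρ₁ =ᵐ[μ] P.W ρ₂ := by
  filter_upwards [P.W_eq_of_eq hρ₁ hρ₂, h] with ω h₁ h₂ using h₁ h₂

lemma W_T_eq : P.W (fun _ => T) =ᵐ[μ] P.Y (fun _ => T) := by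
  have hT := stop0_const (ℱ := ℱ) P.zero_le_T le_rfl
  refine (P.W_le hT fun σ hσ => ?_).antisymm (P.Y_le_W hT)
  obtain rfl : σ = fun _ => T := funext fun ω => (hσ.2.2 ω).antisymm (hσ.2.1 ω)
  exact (FExp.cond_of_measurable hT (P.Y_mem_domPos hT) (P.measurable_Y hT)).le

lemma one_le_W (hS : Stop0 ℱ T S) : ∀ᵐ ω ∂μ, 1 ≤ P.W S ω := by
  have hT := stop0_const (ℱ := ℱ) P.zero_le_T le_rfl
  have h1 : (fun _ => (1 : ℝ)) ≤ᵐ[μ] P.Y (fun _ => T) := by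
    filter_upwards [(P.X_mem_domPos hT).2] with ω h0
    rw [P.Y_of_le (P.stop0_θ.2.2 ω)]
    linarith [show 0 ≤ P.X (fun _ => T) ω from h0]
  filter_upwards [FExp.cond_mono hS (FExp.const_mem_domPos zero_le_one) (P.Y_mem_domPos hT) h1,
    FExp.cond_of_measurable hS (FExp.const_mem_domPos zero_le_one)
      (@measurable_const ℝ Ω _ hS.1.measurableSpace 1),
    P.cond_Y_le_W hS (isStopIn_const_T hS.2.2)] with ω h₁ h₂ h₃
  exact h₂ ▸ h₁.trans h₃

lemma min_mem_lamSet (hS : Stop0 ℱ T S) (hτ : τ ∈ P.lamSet lam S) (hσ : σ ∈ P.lamSet lam S) :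
    (fun ω => min (τ ω) (σ ω)) ∈ P.lamSet lam S := by
  have hmin := hτ.1.min hσ.1
  have h₀ := hmin.stop0 hS
  refine ⟨hmin, ?_⟩
  filter_upwards [hτ.2, hσ.2, P.W_eq_of_eq h₀ (hτ.1.stop0 hS), P.W_eq_of_eq h₀ (hσ.1.stop0 hS),
    P.Y_eq_of_eq h₀ (hτ.1.stop0 hS), P.Y_eq_of_eq h₀ (hσ.1.stop0 hS)] with ω h₁ h₂ w₁ w₂ y₁ y₂
  rcases le_total (τ ω) (σ ω) with h | h
  · rw [w₁ (min_eq_left h), y₁ (min_eq_left h)]; exact h₁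
  · rw [w₂ (min_eq_right h), y₂ (min_eq_right h)]; exact h₂

lemma T_mem_lamSet (hlam : lam ≤ 1) (hS : Stop0 ℱ T S) : (fun _ => T) ∈ P.lamSet lam S := by
  refine ⟨isStopIn_const_T hS.2.2, ?_⟩
  filter_upwards [P.W_T_eq, P.one_le_W (stop0_const P.zero_le_T le_rfl)] with ω h₁ h₂
  rw [← h₁]
  nlinarith

lemma lamSet_anti {a b : ℝ} (hab : a ≤ b) (hS : Stop0 ℱ T S) :
    P.lamSet b S ⊆ P.lamSet a S := fun τ hτ => ⟨hτ.1, by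
  filter_upwards [hτ.2, P.one_le_W (hτ.1.stop0 hS)] with ω h₁ h₂
  nlinarith⟩

lemma stopSet_subset_lamSet (hlam : lam ≤ 1) (hS : Stop0 ℱ T S) :
    P.stopSet S ⊆ P.lamSet lam S := fun τ hτ => ⟨hτ.1, by
  filter_upwards [hτ.2, P.one_le_W (hτ.1.stop0 hS)] with ω h₁ h₂
  rw [← h₁]
  nlinarith⟩

lemma θ_le_of_mem_lamSet (hlam : 0 < lam) (hS : Stop0 ℱ T S) (hτ : τ ∈ P.lamSet lam S) :
    P.θ ≤ᵐ[μ] τ := by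
  filter_upwards [hτ.2, P.one_le_W (hτ.1.stop0 hS)] with ω h₁ h₂
  by_contra h
  rw [P.Y_of_lt (not_le.1 h)] at h₁
  nlinarith

lemma E0_Y_le_E0_Y_max_θ (hσ : Stop0 ℱ T σ) :
    P.E.E0 (P.Y σ) ≤ P.E.E0 (P.Y (fun ω => max (σ ω) (P.θ ω))) := by
  have hσ' := (hσ : IsStopIn ℱ T _ σ).max P.stop0_θ
  refine FExp.E0_mono P.zero_le_T (P.Y_mem_domPos hσ) (P.Y_mem_domPos hσ') ?_
  filter_upwards [P.Y_eq_of_eq hσ hσ', (P.Y_mem_domPos hσ').2] with ω h₁ h₂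
  rcases le_or_gt (P.θ ω) (σ ω) with h | h
  · exact (h₁ (max_eq_left h).symm).le
  · rw [P.Y_of_lt h]; exact h₂

/-- Right-continuity of `E[W]`: `σ ∈ S_ρ` is approached from above by `ρs n ⊔ σ ⊔ θ`, along which
`Y` is right-continuous since these times are after `θ`. -/
lemma tendsto_E0_W_of_antitone (hρ : Stop0 ℱ T ρ) {ρs : ℕ → Ω → ℝ}
    (hρs : ∀ n, Stop0 ℱ T (ρs n))
    (hconv : ∀ᵐ ω ∂μ, Antitone (ρs · ω) ∧ Tendsto (ρs · ω) atTop (𝓝 (ρ ω))) :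
    Tendsto (fun n => P.E.E0 (P.W (ρs n))) atTop (𝓝 (P.E.E0 (P.W ρ))) := by
  have hmono : Monotone fun n => P.E.E0 (P.W (ρs n)) := fun n k hnk =>
    P.E0_W_anti (hρs k) (hρs n) (by filter_upwards [hconv] with ω h using h.1 hnk)
  have hle : ∀ n, P.E.E0 (P.W (ρs n)) ≤ P.E.E0 (P.W ρ) := fun n =>
    P.E0_W_anti hρ (hρs n) (by filter_upwards [hconv] with ω h using h.1.le_of_tendsto h.2 n)
  have hbdd : BddAbove (range fun n => P.E.E0 (P.W (ρs n))) :=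
    ⟨_, by rintro _ ⟨n, rfl⟩; exact hle n⟩
  convert tendsto_atTop_ciSup hmono hbdd using 2
  refine (ciSup_le hle).antisymm' (P.E0_W_le hρ fun σ hσ => ?_)
  set σ' := fun ω => max (σ ω) (P.θ ω)
  have hσ' : Stop0 ℱ T σ' := (hσ.stop0 hρ : IsStopIn ℱ T _ σ).max P.stop0_θ
  have hπ : ∀ n, IsStopIn ℱ T (ρs n) (fun ω => max (ρs n ω) (σ' ω)) :=
    fun n => (IsStopIn.self (hρs n)).max hσ'
  refine (P.E0_Y_le_E0_Y_max_θ (hσ.stop0 hρ)).trans (le_of_tendsto' (P.tendsto_E0_Y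
    (fun n => (hπ n).stop0 (hρs n)) hσ'
    (fun n => .of_forall fun ω => (le_max_right _ _).trans (le_max_right _ _))
    (.of_forall fun ω => le_max_right _ _) (P.ce.1 σ' hσ' _ (fun n => (hπ n).stop0 (hρs n)) ?_))
    fun n => (P.E0_Y_le_E0_W (hρs n) (hπ n)).trans (le_ciSup hbdd n))
  filter_upwards [hconv] with ω h
  refine ⟨fun n k hnk => max_le_max (h.1 hnk) le_rfl, ?_⟩
  have := h.2.max (tendsto_const_nhds (x := σ' ω))
  rwa [max_eq_right ((hσ.2.1 ω).trans (le_max_left _ _))] at this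

/-- `D^λ_S` is closed under `min`, so `{-τ | τ ∈ D^λ_S}` is directed upward. -/
lemma exists_antitone_seq_lamSet (hS : Stop0 ℱ T S) (hlam : lam ≤ 1) :
    ∃ τs : ℕ → Ω → ℝ, (∀ n, τs n ∈ P.lamSet lam S) ∧ ∃ ρ, IsStopIn ℱ T S ρ ∧
      (∀ᵐ ω ∂μ, Antitone (τs · ω) ∧ Tendsto (τs · ω) atTop (𝓝 (ρ ω))) ∧
        ∀ τ ∈ P.lamSet lam S, ρ ≤ᵐ[μ] τ := by
  obtain ⟨fs, hfs, L, hconv, hL⟩ := exists_monotone_seq_of_directed (μ := μ)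
    (s := {f | -f ∈ P.lamSet lam S}) ⟨-(fun _ => T), by simpa using P.T_mem_lamSet hlam hS⟩
    (fun f hf => by simpa using hf.1.measurable.neg)
    (fun f hf g hg => ⟨f ⊔ g, by
      have h := P.min_mem_lamSet hS hf hg
      simp only [Pi.neg_apply, min_neg_neg] at h
      exact h, .rfl⟩)
    (b := 0) (fun f hf => .of_forall fun ω => by
      have := (hS.2.1 ω).trans (hf.1.2.1 ω)
      simp only [Pi.neg_apply, Pi.zero_apply] at this ⊢
      linarith)
  have hτs : ∀ n, IsStopIn ℱ T S (-fs n) := fun n => (hfs n).1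
  have hbdd : ∀ ω, BddBelow (range fun n => (-fs n) ω) :=
    fun ω => ⟨S ω, by rintro _ ⟨n, rfl⟩; exact (hτs n).2.1 ω⟩
  refine ⟨fun n => -fs n, hfs, _, IsStopIn.iInf P.rightContinuous hτs, ?_, fun τ hτ => ?_⟩
  · filter_upwards [hconv] with ω h
    exact ⟨fun n k hnk => neg_le_neg (h.1 hnk),
      tendsto_atTop_ciInf (fun n k hnk => neg_le_neg (h.1 hnk)) (hbdd ω)⟩
  · filter_upwards [hconv, hL (-τ) (by simpa using hτ)] with ω h hω
    have hlim := tendsto_nhds_unique h.2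
      ((tendsto_atTop_ciInf (fun n k hnk => neg_le_neg (h.1 hnk)) (hbdd ω)).neg.congr
        fun n => neg_neg (fs n ω))
    simp only [Pi.neg_apply] at hω hlim ⊢
    linarith

lemma exists_isEssInf_lamSet (hlam₀ : 0 < lam) (hlam₁ : lam ≤ 1) (hS : Stop0 ℱ T S) :
    ∃ ρ, IsStopIn ℱ T S ρ ∧ IsEssInfFam μ (P.lamSet lam S) ρ ∧ P.θ ≤ᵐ[μ] ρ ∧
      lam * P.E.E0 (P.W ρ) ≤ P.E.E0 (P.Y ρ) := by
  obtain ⟨τs, hτs, ρ, hρ, hconv, hlow⟩ := P.exists_antitone_seq_lamSet hS hlam₁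
  have hρ₀ := hρ.stop0 hS
  have hτs₀ := fun n => (hτs n).1.stop0 hS
  have hθτs := fun n => P.θ_le_of_mem_lamSet hlam₀ hS (hτs n)
  have hθρ : P.θ ≤ᵐ[μ] ρ := by
    filter_upwards [hconv, ae_all_iff.2 hθτs] with ω h h' using ge_of_tendsto' h.2 h'
  refine ⟨ρ, hρ, ⟨hlow, fun η hη => ?_⟩, hθρ, le_of_tendsto_of_tendsto'
    ((P.tendsto_E0_W_of_antitone hρ₀ hτs₀ hconv).const_mul lam)
    (P.tendsto_E0_Y hτs₀ hρ₀ hθτs hθρ (P.ce.1 ρ hρ₀ τs hτs₀ hconv)) fun n => ?_⟩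
  · filter_upwards [hconv, ae_all_iff.2 fun n => hη _ (hτs n)] with ω h h'
    exact ge_of_tendsto' h.2 h'
  · have hW := P.W_mem_domPos (hτs₀ n)
    rw [← FExp.E0_const_mul P.zero_le_T P.posHom hW hlam₀.le]
    exact FExp.E0_mono P.zero_le_T (FExp.const_mul_mem_domPos hW hlam₀.le)
      (P.Y_mem_domPos (hτs₀ n)) (hτs n).2

lemma exists_measurable_W (hρ : Stop0 ℱ T ρ) :
    ∃ W', Measurable[hρ.1.measurableSpace] W' ∧ W' =ᵐ[μ] P.W ρ := by
  obtain ⟨σs, hσs, hconv⟩ := P.exists_seq_tendsto_W hρ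
  have hY := fun n => P.Y_mem_domPos ((hσs n).stop0 hρ)
  exact ⟨fun ω => limsup (fun n => P.E.cond ρ (P.Y (σs n)) ω) atTop,
    Measurable.limsup fun n => P.E.cond_adapted hρ (hY n).1 (hY n).2,
    by filter_upwards [hconv] with ω h using h.2.limsup_eq⟩

/-- Otherwise stopping at `ρ` where `λ W ≤ Y`, and at `T` elsewhere, would give an element of
`D^λ_S` below `ρlam`. -/
lemma Y_lt_of_lt_essInf (hlam : lam ≤ 1) (hS : Stop0 ℱ T S)
    (hmin : ∀ τ ∈ P.lamSet lam S, ρlam ≤ᵐ[μ] τ) (hρ : IsStopIn ℱ T S ρ) :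
    ∀ᵐ ω ∂μ, ρ ω < ρlam ω → P.Y ρ ω < lam * P.W ρ ω := by
  classical
  have hρ₀ := hρ.stop0 hS
  have hT := stop0_const (ℱ := ℱ) P.zero_le_T le_rfl
  obtain ⟨W', hW'meas, hW'⟩ := P.exists_measurable_W hρ₀
  set B := {ω | lam * W' ω ≤ P.Y ρ ω}
  have hB : MeasurableSet[hρ₀.1.measurableSpace] B :=
    measurableSet_le (hW'meas.const_mul lam) (P.measurable_Y hρ₀)
  set ρ' := B.piecewise ρ fun _ => T
  have hρ' : IsStopIn ℱ T S ρ' :=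
    ((IsStopIn.self hρ).piecewise hρ₀ hB (isStopIn_const_T hρ.2.2)).of_le hρ.2.1
  have hρ'₀ := hρ'.stop0 hS
  have hρ'D : ρ' ∈ P.lamSet lam S := ⟨hρ', by
    filter_upwards [P.W_eq_of_eq hρ'₀ hρ₀, P.W_eq_of_eq hρ'₀ hT, P.Y_eq_of_eq hρ'₀ hρ₀,
      P.Y_eq_of_eq hρ'₀ hT, hW', P.W_T_eq, P.one_le_W hT] with ω w₁ w₂ y₁ y₂ hw wT w₀
    by_cases h : ω ∈ B
    · have he : ρ' ω = ρ ω := by simp [ρ', h]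
      rw [w₁ he, y₁ he, ← hw]
      exact h
    · have he : ρ' ω = T := by simp [ρ', h]
      rw [w₂ he, y₂ he, ← wT]
      nlinarith⟩
  filter_upwards [hmin ρ' hρ'D, hW'] with ω h₁ h₂ hlt
  by_contra hc
  have hωB : ω ∈ B := show lam * W' ω ≤ P.Y ρ ω by rw [h₂]; exact not_lt.1 hc
  have : ρ' ω = ρ ω := by simp [ρ', hωB]
  linarith

/-- Split at `A = {σ < ρlam}`: on `A` stopping at `σ` is worse than `λ W`, on `Aᶜ` it is
dominated by `W(ρlam)`. -/
lemma cond_Y_le_of_essInf (hlam : lam ≤ 1) (hS : Stop0 ℱ T S) (hρlam : IsStopIn ℱ T S ρlam)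
    (hmin : ∀ τ ∈ P.lamSet lam S, ρlam ≤ᵐ[μ] τ) (hσ : IsStopIn ℱ T S σ) :
    P.E.cond ρlam (P.Y σ) ≤ᵐ[μ] fun ω =>
      lam * P.W (fun ω => min (σ ω) (ρlam ω)) ω + (1 - lam) * P.W ρlam ω := by
  have hσ₀ := hσ.stop0 hS
  have hρlam₀ := hρlam.stop0 hS
  have hρ := hσ.min hρlam
  have hρ₀ := hρ.stop0 hS
  set A := {ω | σ ω < ρlam ω}
  have hA : MeasurableSet[hρlam₀.1.measurableSpace] A := measurableSet_lt_coe hσ.1 hρlam.1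
  have hAm : MeasurableSet A := hρlam₀.1.measurableSpace_le _ hA
  have hY := P.Y_mem_domPos hσ₀
  have hsub := P.subadditive hρlam₀ (FExp.indicator_mem_domPos hY hAm).1
    (FExp.indicator_mem_domPos hY hAm).2 (FExp.indicator_mem_domPos hY hAm.compl).1
    (FExp.indicator_mem_domPos hY hAm.compl).2
  rw [indicator_self_add_compl] at hsub
  filter_upwards [hsub, FExp.cond_of_measurable hρlam₀ (FExp.indicator_mem_domPos hY hAm)
      (measurable_indicator_of_le_on hσ.1 hρlam.1 (P.measurable_Y hσ₀) hA fun ω h => h.le),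
    FExp.cond_indicator hρlam₀ hY hA.compl,
    P.cond_Y_le_W_of_le_on hρlam₀ hσ₀ hA.compl fun ω h => not_lt.1 h,
    P.Y_lt_of_lt_essInf hlam hS hmin hρ, P.Y_eq_of_eq hρ₀ hσ₀, P.W_eq_of_eq hρ₀ hρlam₀,
    P.one_le_W hρ₀, P.one_le_W hρlam₀] with ω h₁ h₂ h₃ h₄ h₅ h₆ h₇ w₁ w₂
  simp only [Pi.add_apply, h₂, h₃] at h₁
  by_cases hω : ω ∈ A
  · have hρσ : min (σ ω) (ρlam ω) = σ ω := min_eq_left (le_of_lt hω)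
    rw [indicator_of_mem hω, indicator_of_notMem (notMem_compl_iff.2 hω), add_zero,
      ← h₆ hρσ] at h₁
    have := h₅ (hρσ.symm ▸ hω)
    nlinarith
  · have hρρ : min (σ ω) (ρlam ω) = ρlam ω := min_eq_right (not_lt.1 hω)
    rw [indicator_of_notMem hω, indicator_of_mem (mem_compl hω), zero_add] at h₁
    rw [h₇ hρρ]
    linarith [h₄ hω]

lemma E0_Y_le_of_essInf (hlam₀ : 0 ≤ lam) (hlam₁ : lam ≤ 1) (hS : Stop0 ℱ T S)
    (hρlam : IsStopIn ℱ T S ρlam) (hmin : ∀ τ ∈ P.lamSet lam S, ρlam ≤ᵐ[μ] τ)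
    (hσ : IsStopIn ℱ T S σ) :
    P.E.E0 (P.Y σ) ≤ lam * P.E.E0 (P.W S) + (1 - lam) * P.E.E0 (P.W ρlam) := by
  have hρlam₀ := hρlam.stop0 hS
  have hρ₀ := (hσ.min hρlam).stop0 hS
  have hY := P.Y_mem_domPos (hσ.stop0 hS)
  have h₁ := FExp.const_mul_mem_domPos (P.W_mem_domPos hρ₀) hlam₀
  have h₂ := FExp.const_mul_mem_domPos (P.W_mem_domPos hρlam₀) (sub_nonneg.2 hlam₁)
  calc P.E.E0 (P.Y σ) = P.E.E0 (P.E.cond ρlam (P.Y σ)) := (FExp.E0_cond hρlam₀ hY).symm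
    _ ≤ P.E.E0 ((fun ω => lam * P.W (fun ω => min (σ ω) (ρlam ω)) ω) +
          fun ω => (1 - lam) * P.W ρlam ω) :=
      FExp.E0_mono P.zero_le_T (FExp.cond_mem_domPos hρlam₀ hY) (FExp.add_mem_domPos h₁ h₂)
        (P.cond_Y_le_of_essInf hlam₁ hS hρlam hmin hσ)
    _ ≤ lam * P.E.E0 (P.W (fun ω => min (σ ω) (ρlam ω))) + (1 - lam) * P.E.E0 (P.W ρlam) := by
      rw [← FExp.E0_const_mul P.zero_le_T P.posHom (P.W_mem_domPos hρ₀) hlam₀,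
        ← FExp.E0_const_mul P.zero_le_T P.posHom (P.W_mem_domPos hρlam₀) (sub_nonneg.2 hlam₁)]
      exact FExp.E0_add_le P.zero_le_T P.subadditive h₁ h₂
    _ ≤ _ := by
      gcongr
      exact P.E0_W_anti hS hρ₀ (.of_forall fun ω => le_min (hσ.2.1 ω) (hρlam.2.1 ω))

lemma E0_W_essInf (hlam₀ : 0 ≤ lam) (hlam₁ : lam < 1) (hS : Stop0 ℱ T S)
    (hρlam : IsStopIn ℱ T S ρlam) (hmin : ∀ τ ∈ P.lamSet lam S, ρlam ≤ᵐ[μ] τ) :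
    P.E.E0 (P.W ρlam) = P.E.E0 (P.W S) := by
  have h := P.E0_W_le hS fun σ hσ => P.E0_Y_le_of_essInf hlam₀ hlam₁.le hS hρlam hmin hσ
  have h' := P.E0_W_anti hS (hρlam.stop0 hS) (.of_forall hρlam.2.1)
  nlinarith

lemma E0_W_eq_of_optimal (hS : Stop0 ℱ T S) (hτ : Stop0 ℱ T τ)
    (hopt : P.W S =ᵐ[μ] P.E.cond S (P.Y τ)) : P.E.E0 (P.W S) = P.E.E0 (P.Y τ) := by
  have hY := P.Y_mem_domPos hτ
  rw [FExp.E0_congr P.zero_le_T (FExp.cond_mem_domPos hS hY) hopt, FExp.E0_cond hS hY]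

lemma mem_stopSet_of_optimal (hS : Stop0 ℱ T S) (hτ : IsStopIn ℱ T S τ)
    (hopt : P.W S =ᵐ[μ] P.E.cond S (P.Y τ)) : τ ∈ P.stopSet S := by
  have hτ₀ := hτ.stop0 hS
  refine ⟨hτ, (FExp.ae_eq_of_E0_eq P.zero_le_T (P.Y_mem_domPos hτ₀) (P.W_mem_domPos hτ₀)
    (P.Y_le_W hτ₀) ?_).symm⟩
  exact le_antisymm (P.E0_Y_le_E0_W hτ₀ (IsStopIn.self hτ))
    (P.E0_W_eq_of_optimal hS hτ₀ hopt ▸ P.E0_W_anti hS hτ₀ (.of_forall hτ.2.1))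

lemma exists_optimal (hS : Stop0 ℱ T S) :
    ∃ τ ∈ P.stopSet S, P.W S =ᵐ[μ] P.E.cond S (P.Y τ) ∧ IsEssInfFam μ (P.stopSet S) τ := by
  obtain ⟨lam, hlam_mono, hlam, hlam_lim⟩ := exists_seq_strictMono_tendsto' (zero_lt_one' ℝ)
  choose ρ hρ hinf hθρ hscal using
    fun n => P.exists_isEssInf_lamSet (hlam n).1 (hlam n).2.le hS
  have hρ₀ := fun n => (hρ n).stop0 hS
  have hρmono : ∀ n, ρ n ≤ᵐ[μ] ρ (n + 1) := fun n => (hinf (n + 1)).2 (ρ n) fun τ hτ =>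
    (hinf n).1 τ (P.lamSet_anti (hlam_mono n.lt_succ_self).le hS hτ)
  have hτ := IsStopIn.iSup hρ
  have hτ₀ := hτ.stop0 hS
  have hconv := IsStopIn.ae_tendsto_iSup (μ := μ) hρ hρmono
  have hθτ : P.θ ≤ᵐ[μ] fun ω => ⨆ n, ρ n ω := by
    filter_upwards [hθρ 0, hconv] with ω h₁ h₂ using h₁.trans (h₂.1.ge_of_tendsto h₂.2 0)
  have hE0ρ : ∀ n, P.E.E0 (P.W (ρ n)) = P.E.E0 (P.W S) := fun n =>
    P.E0_W_essInf (hlam n).1.le (hlam n).2 hS (hρ n) (hinf n).1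
  have hE0τ : P.E.E0 (P.Y fun ω => ⨆ n, ρ n ω) = P.E.E0 (P.W S) := by
    refine tendsto_nhds_unique (P.tendsto_E0_Y hρ₀ hτ₀ hθρ hθτ (P.ce.2 _ hτ₀ ρ hρ₀ hconv)) ?_
    refine tendsto_of_tendsto_of_tendsto_of_le_of_le (by simpa using hlam_lim.mul_const _)
      tendsto_const_nhds (fun n => hE0ρ n ▸ hscal n) fun n => ?_
    exact hE0ρ n ▸ P.E0_Y_le_E0_W (hρ₀ n) (IsStopIn.self (hρ n))
  have hY := P.Y_mem_domPos hτ₀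
  have hopt : P.W S =ᵐ[μ] P.E.cond S (P.Y fun ω => ⨆ n, ρ n ω) :=
    (FExp.ae_eq_of_E0_eq P.zero_le_T (FExp.cond_mem_domPos hS hY) (P.W_mem_domPos hS)
      (P.cond_Y_le_W hS hτ) (by rw [FExp.E0_cond hS hY, hE0τ])).symm
  have hmem := P.mem_stopSet_of_optimal hS hτ hopt
  refine ⟨_, hmem, hopt, fun σ hσ => ?_, fun η hη => hη _ hmem⟩
  filter_upwards [ae_all_iff.2 fun n =>
    (hinf n).1 σ (P.stopSet_subset_lamSet (hlam n).2.le hS hσ)] with ω h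
  exact ciSup_le h

lemma exists_mem_stopSet_ae_eq (hρ₁ : Stop0 ℱ T ρ₁) (hρ₂ : Stop0 ℱ T ρ₂) (hle : ρ₁ ≤ᵐ[μ] ρ₂)
    (hκ : κ ∈ P.stopSet ρ₂) : ∃ κ' ∈ P.stopSet ρ₁, κ' =ᵐ[μ] κ := by
  have hκ₀ := hκ.1.stop0 hρ₂
  have hκ' := (IsStopIn.self hρ₁).max hκ₀
  have hκ'₀ := hκ'.stop0 hρ₁
  have heq : (fun ω => max (ρ₁ ω) (κ ω)) =ᵐ[μ] κ := by
    filter_upwards [hle] with ω h using max_eq_right (h.trans (hκ.1.2.1 ω))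
  exact ⟨_, ⟨hκ', (P.W_congr hκ'₀ hκ₀ heq).trans
    (hκ.2.trans (P.Y_congr hκ'₀ hκ₀ heq).symm)⟩, heq⟩

lemma tendsto_E0_W_of_monotone (hτ : Stop0 ℱ T τ) {τs : ℕ → Ω → ℝ}
    (hτs : ∀ n, Stop0 ℱ T (τs n))
    (hconv : ∀ᵐ ω ∂μ, Monotone (τs · ω) ∧ Tendsto (τs · ω) atTop (𝓝 (τ ω))) :
    Tendsto (fun n => P.E.E0 (P.W (τs n))) atTop (𝓝 (P.E.E0 (P.W τ))) := by
  choose π hπ hopt hinf using fun n => P.exists_optimal (hτs n)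
  have hπ₀ := fun n => (hπ n).1.stop0 (hτs n)
  have hπmono : ∀ n, π n ≤ᵐ[μ] π (n + 1) := fun n => by
    obtain ⟨κ, hκ, heq⟩ := P.exists_mem_stopSet_ae_eq (hτs n) (hτs (n + 1))
      (by filter_upwards [hconv] with ω h using h.1 n.le_succ) (hπ (n + 1))
    filter_upwards [(hinf n).1 κ hκ, heq] with ω h₁ h₂ using h₂ ▸ h₁
  have hπh : Stop0 ℱ T (fun ω => ⨆ n, π n ω) := IsStopIn.iSup hπ₀
  have hπconv := IsStopIn.ae_tendsto_iSup (μ := μ) hπ₀ hπmono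
  have hθπ : ∀ n, P.θ ≤ᵐ[μ] π n := fun n => P.θ_le_of_mem_lamSet one_pos (hτs n)
    (P.stopSet_subset_lamSet le_rfl (hτs n) (hπ n))
  have hθπh : P.θ ≤ᵐ[μ] fun ω => ⨆ n, π n ω := by
    filter_upwards [hθπ 0, hπconv] with ω h₁ h₂ using h₁.trans (h₂.1.ge_of_tendsto h₂.2 0)
  have hE0 := fun n => P.E0_W_eq_of_optimal (hτs n) (hπ₀ n) (hopt n)
  have hlim := P.tendsto_E0_Y hπ₀ hπh hθπ hθπh (P.ce.2 _ hπh π hπ₀ hπconv)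
  simp only [hE0]
  convert hlim using 2
  have hτπ : τ ≤ᵐ[μ] fun ω => ⨆ n, π n ω := by
    filter_upwards [hconv, hπconv] with ω h₁ h₂
    exact le_of_tendsto_of_tendsto' h₁.2 h₂.2 fun n => (hπ n).1.2.1 ω
  refine le_antisymm (ge_of_tendsto' hlim fun n => ?_) ?_
  · rw [← hE0 n]
    refine P.E0_W_anti (hτs n) hτ ?_
    filter_upwards [hconv] with ω h using h.1.ge_of_tendsto h.2 n
  · have hκ := (IsStopIn.self hτ).max hπh
    have heq : (fun ω => ⨆ n, π n ω) =ᵐ[μ] fun ω => max (τ ω) (⨆ n, π n ω) := by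
      filter_upwards [hτπ] with ω h using (max_eq_right h).symm
    rw [FExp.E0_congr P.zero_le_T (P.Y_mem_domPos (hκ.stop0 hτ))
      (P.Y_congr hπh (hκ.stop0 hτ) heq)]
    exact P.E0_Y_le_E0_W hτ hκ

end ModifiedProblem

theorem modified_reward_optimal_general [IsProbabilityMeasure μ]
    (hcf : CompleteFiltration μ ℱ) (hrcf : RightContinuousFiltration ℱ)
    (𝔈 : FExp μ T ℱ) (h6 : 𝔈.Subadditive) (h7 : 𝔈.PosHom)
    (X : (Ω → ℝ) → Ω → ℝ) (hX : Admissible 𝔈 X) (hXce : CE 𝔈 X)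
    (hbdd : BddRewardE0 𝔈 X)
    (θ : Ω → ℝ) (hθ : Stop0 ℱ T θ)
    (X' : (Ω → ℝ) → Ω → ℝ)
    (hX' : ∀ τ : Ω → ℝ, X' τ = fun ω => if θ ω ≤ τ ω then X τ ω else -1)
    (v' : (Ω → ℝ) → Ω → ℝ)
    (hv' : ∀ S : Ω → ℝ, Stop0 ℱ T S → IsEssSupFam μ
      {g | ∃ τ : Ω → ℝ, IsStopIn ℱ T S τ ∧
        g = fun ω => 𝔈.cond S (fun ω' => X' τ ω' + 1) ω - 1} (v' S)) :
    -- existence of an optimal stopping time for v'(S)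
    (∀ S : Ω → ℝ, Stop0 ℱ T S → ∃ τo : Ω → ℝ, IsStopIn ℱ T S τo ∧
      v' S =ᵐ[μ] fun ω => 𝔈.cond S (fun ω' => X' τo ω' + 1) ω - 1) ∧
    -- τ'(S) is the minimal optimal stopping time
    (∀ S : Ω → ℝ, Stop0 ℱ T S → ∀ ts : Ω → ℝ, (∀ ω, S ω ≤ ts ω ∧ ts ω ≤ T) →
      IsEssInfFam μ {τ | IsStopIn ℱ T S τ ∧ v' τ =ᵐ[μ] X' τ} ts →
      IsStoppingTime ℱ (fun ω => (ts ω : WithTop ℝ)) ∧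
        (v' S =ᵐ[μ] fun ω => 𝔈.cond S (fun ω' => X' ts ω' + 1) ω - 1) ∧
        ∀ τ : Ω → ℝ, IsStopIn ℱ T S τ →
          (v' S =ᵐ[μ] fun ω => 𝔈.cond S (fun ω' => X' τ ω' + 1) ω - 1) →
          ts ≤ᵐ[μ] τ) ∧
    -- the family v' is LCE
    ∀ τ : Ω → ℝ, Stop0 ℱ T τ → ∀ τs : ℕ → Ω → ℝ, (∀ n, Stop0 ℱ T (τs n)) →
      (∀ᵐ ω ∂μ, Monotone (fun n => τs n ω) ∧
        Tendsto (fun n => τs n ω) atTop (nhds (τ ω))) →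
      Tendsto (fun n => 𝔈.E0 (fun ω => v' (τs n) ω + 1) - 1) atTop
        (nhds (𝔈.E0 (fun ω => v' τ ω + 1) - 1)) := by
  have hY := add_one_eq_modifiedReward hX'
  let P : ModifiedProblem μ T ℱ := ⟨𝔈, h6, h7, X, hX, hXce, hbdd, θ, hθ,
    fun S ω => v' S ω + 1, fun S hS => by simpa only [hY] using isEssSupFam_add_const 1 (hv' S hS),
    hcf, hrcf⟩
  have hopt : ∀ S τ, (v' S =ᵐ[μ] fun ω => 𝔈.cond S (fun ω' => X' τ ω' + 1) ω - 1) ↔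
      P.W S =ᵐ[μ] P.E.cond S (P.Y τ) := fun S τ => by
    show _ ↔ ∀ᵐ ω ∂μ, v' S ω + 1 = 𝔈.cond S (modifiedReward X θ τ) ω
    simp only [EventuallyEq, ← hY, eq_sub_iff_add_eq]
  have hstop : ∀ S, {τ | IsStopIn ℱ T S τ ∧ v' τ =ᵐ[μ] X' τ} = P.stopSet S := fun S => by
    ext τ
    show _ ↔ _ ∧ ∀ᵐ ω ∂μ, v' τ ω + 1 = modifiedReward X θ τ ω
    simp only [EventuallyEq, mem_ofPred_eq, ← hY, add_left_inj]
  refine ⟨fun S hS => ?_, fun S hS ts hts hinf => ?_, fun τ hτ τs hτs hconv =>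
    (P.tendsto_E0_W_of_monotone hτ hτs hconv).sub_const 1⟩
  · obtain ⟨τ, hτ, hτopt, -⟩ := P.exists_optimal hS
    exact ⟨τ, hτ.1, (hopt S τ).2 hτopt⟩
  · obtain ⟨τ, hτ, hτopt, hτinf⟩ := P.exists_optimal hS
    rw [hstop] at hinf
    have heq := hinf.ae_eq hτinf
    have hts₀ : Stop0 ℱ T ts := ⟨isStoppingTime_congr_ae hcf hτ.1.1 heq,
      fun ω => (hS.2.1 ω).trans (hts ω).1, fun ω => (hts ω).2⟩
    refine ⟨hts₀.1, (hopt S ts).2 (hτopt.trans (FExp.cond_congr hS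
      (P.Y_mem_domPos (hτ.1.stop0 hS)) (P.Y_congr hts₀ (hτ.1.stop0 hS) heq)).symm),
      fun σ hσ hσopt => hinf.1 σ (P.mem_stopSet_of_optimal hS hσ ((hopt S σ).1 hσopt))⟩

/-- the modified-reward problem admits an optimal stopping time, `τ'(S)`
is the minimal optimal stopping time, and the value function family `v'` is LCE.
Here `E_S[X'(τ)] := E_S[X'(τ) + 1] − 1`. -/
theorem modified_reward_optimal [IsProbabilityMeasure μ] (hT : 0 < T)
    (hcf : CompleteFiltration μ ℱ) (hrcf : RightContinuousFiltration ℱ)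
    (𝔈 : FExp μ T ℱ) (h6 : 𝔈.Subadditive) (h7 : 𝔈.PosHom)
    (X : (Ω → ℝ) → Ω → ℝ) (hX : Admissible 𝔈 X) (hXce : CE 𝔈 X)
    (hbdd : BddRewardE0 𝔈 X)
    (θ : Ω → ℝ) (hθ : Stop0 ℱ T θ)
    (X' : (Ω → ℝ) → Ω → ℝ)
    (hX' : ∀ τ : Ω → ℝ, X' τ = fun ω => if θ ω ≤ τ ω then X τ ω else -1)
    (v' : (Ω → ℝ) → Ω → ℝ)
    (hv' : ∀ S : Ω → ℝ, Stop0 ℱ T S → IsEssSupFam μ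
      {g | ∃ τ : Ω → ℝ, IsStopIn ℱ T S τ ∧
        g = fun ω => 𝔈.cond S (fun ω' => X' τ ω' + 1) ω - 1} (v' S)) :
    -- existence of an optimal stopping time for v'(S)
    (∀ S : Ω → ℝ, Stop0 ℱ T S → ∃ τo : Ω → ℝ, IsStopIn ℱ T S τo ∧
      v' S =ᵐ[μ] fun ω => 𝔈.cond S (fun ω' => X' τo ω' + 1) ω - 1) ∧
    -- τ'(S) is the minimal optimal stopping time
    (∀ S : Ω → ℝ, Stop0 ℱ T S → ∀ ts : Ω → ℝ, (∀ ω, S ω ≤ ts ω ∧ ts ω ≤ T) →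
      IsEssInfFam μ {τ | IsStopIn ℱ T S τ ∧ v' τ =ᵐ[μ] X' τ} ts →
      IsStoppingTime ℱ (fun ω => (ts ω : WithTop ℝ)) ∧
        (v' S =ᵐ[μ] fun ω => 𝔈.cond S (fun ω' => X' ts ω' + 1) ω - 1) ∧
        ∀ τ : Ω → ℝ, IsStopIn ℱ T S τ →
          (v' S =ᵐ[μ] fun ω => 𝔈.cond S (fun ω' => X' τ ω' + 1) ω - 1) →
          ts ≤ᵐ[μ] τ) ∧
    -- the family v' is LCE
    ∀ τ : Ω → ℝ, Stop0 ℱ T τ → ∀ τs : ℕ → Ω → ℝ, (∀ n, Stop0 ℱ T (τs n)) →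
      (∀ᵐ ω ∂μ, Monotone (fun n => τs n ω) ∧
        Tendsto (fun n => τs n ω) atTop (nhds (τ ω))) →
      Tendsto (fun n => 𝔈.E0 (fun ω => v' (τs n) ω + 1) - 1) atTop
        (nhds (𝔈.E0 (fun ω => v' τ ω + 1) - 1)) :=
  modified_reward_optimal_general hcf hrcf 𝔈 h6 h7 X hX hXce hbdd θ hθ X' hX' v' hv'

end OptMultStop
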